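/- arXiv:1108.3655 — 7 statements merged into one kernel-verified Lean document; each statement's English description precedes it below -/
import Mathlib

section
/- If G is a 2-connected graph with at least 4 vertices, v is a vertex of degree at least 3 in G, and x1, x2 are neighbours of v such that both edges vx1 and vx2 are critical (their removal reduces connectivity below 2), then x1x2 is not an edge of G. -/
open SimpleGraph Sum

noncomputable section

/-- Number of connected components of a graph. -/
def numComponents {V : Type*} (G : SimpleGraph V) : ℕ :=
  Nat.card G.ConnectedComponent

/-- `v` is a cut-vertex of `G` if deleting it increases the number of components. -/
def IsCutVertex {V : Type*} (G : SimpleGraph V) (v : V) : Prop :=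
  numComponents G < numComponents (G.induce {w | w ≠ v})

/-- Strict 2-connectivity: at least 3 vertices and connected after deleting any vertex. -/
def StrictTwoConnected {V : Type*} (G : SimpleGraph V) : Prop :=
  3 ≤ Nat.card V ∧ ∀ v : V, (G.induce {w | w ≠ v}).Connected

/-- Conventional 2-connectivity: connected with no cut-vertex (so K1, K2 count). -/
def TwoConnConv {V : Type*} (G : SimpleGraph V) : Prop :=
  G.Connected ∧ ∀ v : V, ¬ IsCutVertex G v

/-- An edge is critical if its deletion destroys (strict) 2-connectivity. -/
def IsCriticalEdge {V : Type*} (G : SimpleGraph V) (e : Sym2 V) : Prop :=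
  e ∈ G.edgeSet ∧ ¬ StrictTwoConnected (G.deleteEdges {e})

/-- A block: a maximal 2-connected subgraph (conventionally, K1 and K2 are 2-connected). -/
def IsBlock {V : Type*} (G : SimpleGraph V) (H : G.Subgraph) : Prop :=
  TwoConnConv H.coe ∧ ∀ H' : G.Subgraph, H ≤ H' → TwoConnConv H'.coe → H' = H

/-- A leaf block: a block containing exactly one cut-vertex of `G`. -/
def IsLeafBlock {V : Type*} (G : SimpleGraph V) (H : G.Subgraph) : Prop :=
  IsBlock G H ∧ ∃! v : V, v ∈ H.verts ∧ IsCutVertex G v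

/-- An isolated component: a maximal connected subgraph. -/
def IsIsolatedComponent {V : Type*} (G : SimpleGraph V) (H : G.Subgraph) : Prop :=
  H.coe.Connected ∧ ∀ H' : G.Subgraph, H ≤ H' → H'.coe.Connected → H' = H

/-- Length of the longest edge of a plane-embedded graph. -/
def maxEdgeLen {W : Type*} (H : SimpleGraph W) (p : W → EuclideanSpace ℝ (Fin 2)) : ℝ :=
  sSup {d : ℝ | ∃ a b : W, H.Adj a b ∧ d = dist (p a) (p b)}


section Helpers

variable {V : Type*}

/-- The graph `H` with vertex `u` "removed" (made isolated), on the same vertex type. -/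
def avd (H : SimpleGraph V) (u : V) : SimpleGraph V where
  Adj a b := H.Adj a b ∧ a ≠ u ∧ b ≠ u
  symm := ⟨fun a b h => ⟨h.1.symm, h.2.2, h.2.1⟩⟩
  loopless := ⟨fun a h => H.loopless.irrefl a h.1⟩

lemma avd_walk_ne {H : SimpleGraph V} {u : V} :
    ∀ {a b : V}, (avd H u).Walk a b → a ≠ u → b ≠ u
  | _, _, SimpleGraph.Walk.nil, ha => ha
  | _, _, SimpleGraph.Walk.cons h p, _ => avd_walk_ne p h.2.2

lemma avd_reach_ne {H : SimpleGraph V} {u a b : V}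
    (h : (avd H u).Reachable a b) (ha : a ≠ u) : b ≠ u := by
  obtain ⟨w⟩ := h; exact avd_walk_ne w ha

lemma walk_reach_mono {H H' : SimpleGraph V}
    (hedge : ∀ a b : V, H.Adj a b → H'.Reachable a b) :
    ∀ {a b : V}, H.Walk a b → H'.Reachable a b
  | _, _, SimpleGraph.Walk.nil => Reachable.refl _
  | _, _, SimpleGraph.Walk.cons h p => (hedge _ _ h).trans (walk_reach_mono hedge p)

lemma reach_mono {H H' : SimpleGraph V}
    (hedge : ∀ a b : V, H.Adj a b → H'.Reachable a b) {a b : V}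
    (h : H.Reachable a b) : H'.Reachable a b := by
  obtain ⟨w⟩ := h; exact walk_reach_mono hedge w

lemma walk_ind {H : SimpleGraph V} (P : V → Prop)
    (hstep : ∀ a b : V, H.Adj a b → P a → P b) :
    ∀ {a b : V}, H.Walk a b → P a → P b
  | _, _, SimpleGraph.Walk.nil, ha => ha
  | _, _, SimpleGraph.Walk.cons h p, ha => walk_ind P hstep p (hstep _ _ h ha)

lemma reach_ind {H : SimpleGraph V} (P : V → Prop)
    (hstep : ∀ a b : V, H.Adj a b → P a → P b) {a b : V}
    (h : H.Reachable a b) (ha : P a) : P b := by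
  obtain ⟨w⟩ := h; exact walk_ind P hstep w ha

lemma induce_reach_to_avd {H : SimpleGraph V} {u a b : V} (ha : a ≠ u) (hb : b ≠ u)
    (h : (H.induce {w | w ≠ u}).Reachable ⟨a, ha⟩ ⟨b, hb⟩) :
    (avd H u).Reachable a b := by
  let f : (H.induce {w | w ≠ u}) →g (avd H u) :=
    { toFun := Subtype.val, map_rel' := fun {x y} hxy => ⟨hxy, x.2, y.2⟩ }
  exact h.map f

lemma avd_walk_to_induce {H : SimpleGraph V} {u : V} :
    ∀ {a b : V} (_ : (avd H u).Walk a b) (ha : a ≠ u) (hb : b ≠ u),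
      (H.induce {w | w ≠ u}).Reachable ⟨a, ha⟩ ⟨b, hb⟩
  | _, _, SimpleGraph.Walk.nil, _, _ => Reachable.refl _
  | _, _, SimpleGraph.Walk.cons h p, ha, hb =>
      (SimpleGraph.Adj.reachable
        (show (H.induce {w | w ≠ u}).Adj ⟨_, ha⟩ ⟨_, h.2.2⟩ from h.1)).trans
        (avd_walk_to_induce p h.2.2 hb)

lemma avd_reach_to_induce {H : SimpleGraph V} {u a b : V} (ha : a ≠ u) (hb : b ≠ u)
    (h : (avd H u).Reachable a b) :
    (H.induce {w | w ≠ u}).Reachable ⟨a, ha⟩ ⟨b, hb⟩ := by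
  obtain ⟨w⟩ := h; exact avd_walk_to_induce w ha hb

lemma conn_of_avd {H : SimpleGraph V} {u : V} (hne : Nonempty {w : V | w ≠ u})
    (h : ∀ a b : V, a ≠ u → b ≠ u → (avd H u).Reachable a b) :
    (H.induce {w | w ≠ u}).Connected := by
  rw [connected_iff]
  exact ⟨fun a b => avd_reach_to_induce a.2 b.2 (h a b a.2 b.2), hne⟩

lemma avd_of_conn {H : SimpleGraph V} {u : V}
    (h : (H.induce {w | w ≠ u}).Connected) (a b : V) (ha : a ≠ u) (hb : b ≠ u) :
    (avd H u).Reachable a b :=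
  induce_reach_to_avd ha hb (h.preconnected _ _)

end Helpers

theorem stmt0 {V : Type*} [Fintype V] (G : SimpleGraph V)
    (hG : StrictTwoConnected G) (hcard : 4 ≤ Nat.card V)
    (v x1 x2 : V) (h1 : G.Adj v x1) (h2 : G.Adj v x2) (h12 : x1 ≠ x2)
    (hdeg : 3 ≤ (G.neighborSet v).ncard)
    (hc1 : IsCriticalEdge G s(v, x1)) (hc2 : IsCriticalEdge G s(v, x2)) :
    ¬ G.Adj x1 x2 := by
  intro hadj
  obtain ⟨hG3, hGconn⟩ := hG
  have hcard3 : (3:ℕ) ≤ Nat.card V := by omega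
  -- `key`: if vx1-like edge `va` is deleted and a vertex `u ≠ b` is removed,
  -- the graph stays connected (using the bypass v–b–a).
  have key : ∀ (a b : V), G.Adj v a → G.Adj v b → a ≠ b → G.Adj a b →
      ∀ u : V, u ≠ b → ((G.deleteEdges {s(v,a)}).induce {w | w ≠ u}).Connected := by
    intro a b hva hvb hab hadj' u hub
    have hc := hGconn u
    refine conn_of_avd hc.nonempty ?_
    intro p q hp hq
    refine reach_mono ?_ (avd_of_conn hc p q hp hq)
    intro c d hcd
    obtain ⟨hGcd, hcu, hdu⟩ := hcd
    by_cases he : s(c,d) = s(v,a)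
    · -- c,d is the deleted edge; go around via b
      rw [Sym2.eq_iff] at he
      have hvu : v ≠ u := by rcases he with ⟨rfl,rfl⟩|⟨rfl,rfl⟩ <;> assumption
      have hau : a ≠ u := by rcases he with ⟨rfl,rfl⟩|⟨rfl,rfl⟩ <;> assumption
      have e1 : (avd (G.deleteEdges {s(v,a)}) u).Adj v b := by
        refine ⟨?_, hvu, hub.symm⟩
        rw [SimpleGraph.deleteEdges_adj]
        refine ⟨hvb, ?_⟩
        simp only [Set.mem_singleton_iff, Sym2.eq_iff]
        rintro (⟨-,rfl⟩|⟨rfl,-⟩)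
        · exact hab rfl
        · exact hva.ne rfl
      have e2 : (avd (G.deleteEdges {s(v,a)}) u).Adj b a := by
        refine ⟨?_, hub.symm, hau⟩
        rw [SimpleGraph.deleteEdges_adj]
        refine ⟨hadj'.symm, ?_⟩
        simp only [Set.mem_singleton_iff, Sym2.eq_iff]
        rintro (⟨rfl,-⟩|⟨rfl,rfl⟩)
        · exact hvb.ne rfl
        · exact hva.ne rfl
      have hr : (avd (G.deleteEdges {s(v,a)}) u).Reachable v a :=
        e1.reachable.trans e2.reachable
      rcases he with ⟨rfl,rfl⟩|⟨rfl,rfl⟩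
      · exact hr
      · exact hr.symm
    · exact SimpleGraph.Adj.reachable ⟨by rw [SimpleGraph.deleteEdges_adj]; exact ⟨hGcd, by simpa using he⟩, hcu, hdu⟩
  -- the cut vertex for the deleted edge vx1 must be x2, and vice versa
  have getw : ∀ (a b : V), G.Adj v a → G.Adj v b → a ≠ b → G.Adj a b →
      ¬ StrictTwoConnected (G.deleteEdges {s(v,a)}) →
      ¬ ((G.deleteEdges {s(v,a)}).induce {w | w ≠ b}).Connected := by
    intro a b hva hvb hab hadj' hns
    rw [StrictTwoConnected] at hns
    push_neg at hns
    obtain ⟨u, hu⟩ := hns hcard3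
    rcases eq_or_ne u b with rfl | hub
    · exact hu
    · exact absurd (key a b hva hvb hab hadj' u hub) hu
  have hw1 : ¬ ((G.deleteEdges {s(v,x1)}).induce {w | w ≠ x2}).Connected :=
    getw x1 x2 h1 h2 h12 hadj hc1.2
  have hw2 : ¬ ((G.deleteEdges {s(v,x2)}).induce {w | w ≠ x1}).Connected :=
    getw x2 x1 h2 h1 h12.symm hadj.symm hc2.2
  -- hence v and x1 are separated in (G - vx1) - x2, and similarly for the other
  have sep : ∀ (a b : V), G.Adj v a → a ≠ b →
      ¬ ((G.deleteEdges {s(v,a)}).induce {w | w ≠ b}).Connected →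
      ¬ (avd (G.deleteEdges {s(v,a)}) b).Reachable v a := by
    intro a b hva hab hnc hR
    apply hnc
    have hc := hGconn b
    refine conn_of_avd hc.nonempty ?_
    intro p q hp hq
    refine reach_mono ?_ (avd_of_conn hc p q hp hq)
    intro c d hcd
    obtain ⟨hGcd, hcb, hdb⟩ := hcd
    by_cases he : s(c,d) = s(v,a)
    · rw [Sym2.eq_iff] at he
      rcases he with ⟨rfl,rfl⟩|⟨rfl,rfl⟩
      · exact hR
      · exact hR.symm
    · exact SimpleGraph.Adj.reachable ⟨by rw [SimpleGraph.deleteEdges_adj]; exact ⟨hGcd, by simpa using he⟩, hcb, hdb⟩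
  have S1 : ¬ (avd (G.deleteEdges {s(v,x1)}) x2).Reachable v x1 := sep x1 x2 h1 h12 hw1
  have S2 : ¬ (avd (G.deleteEdges {s(v,x2)}) x1).Reachable v x2 := sep x2 x1 h2 h12.symm hw2
  -- v has a third neighbour y
  obtain ⟨y, hvy, hyx1, hyx2⟩ : ∃ y, G.Adj v y ∧ y ≠ x1 ∧ y ≠ x2 := by
    by_contra hcon
    push_neg at hcon
    have hsub : G.neighborSet v ⊆ {x1, x2} := by
      intro y hy
      by_contra hy2
      simp only [Set.mem_insert_iff, Set.mem_singleton_iff, not_or] at hy2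
      exact hy2.2 (hcon y hy hy2.1)
    have hle := Set.ncard_le_ncard hsub (Set.toFinite _)
    have h2' : ({x1,x2} : Set V).ncard ≤ 2 := by
      refine le_trans (Set.ncard_insert_le _ _) ?_
      simp [Set.ncard_singleton]
    omega
  -- the invariant: every vertex reachable from x1 in G - v stays on the
  -- x1-side of (G-vx1)-x2 or on the x2-side of (G-vx2)-x1
  set P : V → Prop := fun w =>
    (avd (G.deleteEdges {s(v,x1)}) x2).Reachable x1 w ∨
    (avd (G.deleteEdges {s(v,x2)}) x1).Reachable x2 w with hP
  have hstep : ∀ a b : V, (avd G v).Adj a b → P a → P b := by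
    intro a b hab hPa
    obtain ⟨hGab, hav, hbv⟩ := hab
    rcases hPa with h | h
    · have hax2 : a ≠ x2 := avd_reach_ne h h12
      rcases eq_or_ne b x2 with rfl | hbx2
      · exact Or.inr (Reachable.refl _)
      · refine Or.inl (h.trans (SimpleGraph.Adj.reachable ⟨?_, hax2, hbx2⟩))
        rw [SimpleGraph.deleteEdges_adj]
        refine ⟨hGab, ?_⟩
        simp only [Set.mem_singleton_iff, Sym2.eq_iff]
        rintro (⟨rfl,-⟩|⟨-,rfl⟩)
        · exact hav rfl
        · exact hbv rfl
    · have hax1 : a ≠ x1 := avd_reach_ne h h12.symm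
      rcases eq_or_ne b x1 with rfl | hbx1
      · exact Or.inl (Reachable.refl _)
      · refine Or.inr (h.trans (SimpleGraph.Adj.reachable ⟨?_, hax1, hbx1⟩))
        rw [SimpleGraph.deleteEdges_adj]
        refine ⟨hGab, ?_⟩
        simp only [Set.mem_singleton_iff, Sym2.eq_iff]
        rintro (⟨rfl,-⟩|⟨-,rfl⟩)
        · exact hav rfl
        · exact hbv rfl
  have hRv : (avd G v).Reachable x1 y := avd_of_conn (hGconn v) x1 y h1.ne' hvy.ne'
  have hPy : P y := reach_ind P hstep hRv (Or.inl (Reachable.refl _))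
  -- but y is on v's side in both graphs: contradiction
  have ev1 : (avd (G.deleteEdges {s(v,x1)}) x2).Adj v y := by
    refine ⟨?_, h2.ne, hyx2⟩
    rw [SimpleGraph.deleteEdges_adj]
    refine ⟨hvy, ?_⟩
    simp only [Set.mem_singleton_iff, Sym2.eq_iff]
    rintro (⟨-,rfl⟩|⟨rfl,-⟩)
    · exact hyx1 rfl
    · exact h1.ne rfl
  have ev2 : (avd (G.deleteEdges {s(v,x2)}) x1).Adj v y := by
    refine ⟨?_, h1.ne, hyx1⟩
    rw [SimpleGraph.deleteEdges_adj]
    refine ⟨hvy, ?_⟩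
    simp only [Set.mem_singleton_iff, Sym2.eq_iff]
    rintro (⟨-,rfl⟩|⟨rfl,-⟩)
    · exact hyx2 rfl
    · exact h2.ne rfl
  rcases hPy with h | h
  · exact S1 (ev1.reachable.trans h.symm)
  · exact S2 (ev2.reachable.trans h.symm)
end
end

section
/- Let G be a 2-connected graph with at least 4 vertices, v a vertex of degree at least 3 in G, and x1, x2 neighbours of v such that both edges vx1 and vx2 are critical. Then the graph obtained from G by deleting edge vx1 and adding edge x1x2 is 2-connected. -/
open SimpleGraph Sum

noncomputable section

section API
variable {V : Type*} {G G' : SimpleGraph V} {s t : Set V} {F F' : Set (Sym2 V)} {a b c : V}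

/-- Reachability within vertex set `s` avoiding edges in `F`. -/
def ReachIn (G : SimpleGraph V) (s : Set V) (F : Set (Sym2 V)) (a b : V) : Prop :=
  ∃ p : G.Walk a b, (∀ x ∈ p.support, x ∈ s) ∧ ∀ e ∈ p.edges, e ∉ F

theorem ReachIn.refl (ha : a ∈ s) : ReachIn G s F a a :=
  ⟨SimpleGraph.Walk.nil, by simp [ha], by simp⟩

theorem ReachIn.left_mem (h : ReachIn G s F a b) : a ∈ s := by
  obtain ⟨p, hs, -⟩ := h; exact hs a p.start_mem_support

theorem ReachIn.right_mem (h : ReachIn G s F a b) : b ∈ s := by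
  obtain ⟨p, hs, -⟩ := h; exact hs b p.end_mem_support

theorem ReachIn.cons (hadj : G.Adj a c) (ha : a ∈ s) (hF : s(a,c) ∉ F)
    (h : ReachIn G s F c b) : ReachIn G s F a b := by
  obtain ⟨p, hs, hf⟩ := h
  refine ⟨SimpleGraph.Walk.cons hadj p, ?_, ?_⟩
  · intro x hx; rw [SimpleGraph.Walk.support_cons] at hx
    rcases List.mem_cons.mp hx with hx | hx
    · exact hx ▸ ha
    · exact hs x hx
  · intro e he; rw [SimpleGraph.Walk.edges_cons] at he
    rcases List.mem_cons.mp he with he | he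
    · exact he ▸ hF
    · exact hf e he

theorem ReachIn.single (hadj : G.Adj a b) (ha : a ∈ s) (hb : b ∈ s) (hF : s(a,b) ∉ F) :
    ReachIn G s F a b :=
  ReachIn.cons hadj ha hF (ReachIn.refl hb)

theorem ReachIn.trans (h : ReachIn G s F a b) (h' : ReachIn G s F b c) : ReachIn G s F a c := by
  obtain ⟨p, hs, hf⟩ := h; obtain ⟨q, hs', hf'⟩ := h'
  refine ⟨p.append q, ?_, ?_⟩
  · intro x hx; rw [SimpleGraph.Walk.support_append] at hx
    rcases List.mem_append.mp hx with hx | hx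
    · exact hs x hx
    · exact hs' x (List.mem_of_mem_tail hx)
  · intro e he; rw [SimpleGraph.Walk.edges_append] at he
    rcases List.mem_append.mp he with he | he
    · exact hf e he
    · exact hf' e he

theorem ReachIn.symm (h : ReachIn G s F a b) : ReachIn G s F b a := by
  obtain ⟨p, hs, hf⟩ := h
  exact ⟨p.reverse, by simpa using hs, by simpa using hf⟩

theorem ReachIn.mono_s (hst : s ⊆ t) (h : ReachIn G s F a b) : ReachIn G t F a b := by
  obtain ⟨p, hs, hf⟩ := h; exact ⟨p, fun x hx => hst (hs x hx), hf⟩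

theorem ReachIn.mono_graph (hle : G ≤ G') (h : ReachIn G s F a b) : ReachIn G' s F a b := by
  obtain ⟨p, hs, hf⟩ := h
  induction p with
  | nil => exact ReachIn.refl (hs _ (by simp))
  | cons hadj q ih =>
    refine ReachIn.cons (hle hadj) (hs _ (by simp)) (hf _ (by simp)) (ih ?_ ?_)
    · intro x hx; exact hs x (by simp [hx])
    · intro e he; exact hf e (by simp [he])

/-- Change the forbidden edge set, provided every new forbidden edge has a vertex outside `s`. -/
theorem ReachIn.avoid (h : ReachIn G s F a b) (hF' : ∀ e ∈ F', ∃ x ∈ e, x ∉ s) :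
    ReachIn G s F' a b := by
  obtain ⟨p, hs, -⟩ := h
  refine ⟨p, hs, fun e he hmem => ?_⟩
  obtain ⟨x, hxe, hxs⟩ := hF' e hmem
  induction e with
  | h u w =>
    rcases Sym2.mem_iff.mp hxe with rfl | rfl
    · exact hxs (hs x (p.fst_mem_support_of_mem_edges he))
    · exact hxs (hs x (p.snd_mem_support_of_mem_edges he))

/-- Strengthening: the walk stays within the set of points that reach `b`. -/
theorem ReachIn.strengthen (h : ReachIn G s F a b) :
    ReachIn G {x | x ∈ s ∧ ReachIn G s F x b} F a b := by
  obtain ⟨p, hs, hf⟩ := h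
  induction p with
  | nil => exact ReachIn.refl ⟨hs _ (by simp), ReachIn.refl (hs _ (by simp))⟩
  | cons hadj q ih =>
    refine ReachIn.cons hadj ⟨hs _ (by simp), ⟨SimpleGraph.Walk.cons hadj q, hs, hf⟩⟩
      (hf _ (by simp)) (ih ?_ ?_)
    · intro x hx; exact hs x (by simp [hx])
    · intro e he; exact hf e (by simp [he])

/-- Bridge dichotomy helper. -/
private theorem dichotomy_aux {v x1 : V} :
    ∀ {u w : V} (p : G.Walk u w), (∀ x ∈ p.support, x ∈ s) → v = w →
      ReachIn G s {s(v,x1)} u v ∨ ReachIn G s {s(v,x1)} u x1 := by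
  intro u w p
  induction p with
  | nil => rintro hs rfl; exact Or.inl (ReachIn.refl (hs _ (by simp)))
  | @cons u c w hadj q ih =>
    rintro hs rfl
    have hu : u ∈ s := hs _ (by simp)
    have ih' := ih (fun x hx => hs x (by simp [hx])) rfl
    by_cases hE : s(u, c) = s(v, x1)
    · rcases Sym2.eq_iff.mp hE with ⟨h1, h2⟩ | ⟨h1, h2⟩
      · exact Or.inl (h1 ▸ ReachIn.refl hu)
      · exact Or.inr (h1 ▸ ReachIn.refl hu)
    · rcases ih' with h' | h'
      · exact Or.inl (ReachIn.cons hadj hu (by simpa using hE) h')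
      · exact Or.inr (ReachIn.cons hadj hu (by simpa using hE) h')

/-- Bridge dichotomy: reaching `v` avoiding no edges gives reaching `v` or `x1`
avoiding the edge `s(v,x1)`. -/
theorem ReachIn.dichotomy {v x1 : V} (h : ReachIn G s ∅ a v) :
    ReachIn G s {s(v,x1)} a v ∨ ReachIn G s {s(v,x1)} a x1 := by
  obtain ⟨p, hs, -⟩ := h
  exact dichotomy_aux p hs rfl

private theorem toReachable_aux :
    ∀ {a b : V} (p : G.Walk a b), (∀ x ∈ p.support, x ∈ s) → (∀ e ∈ p.edges, e ∉ F) →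
      ∀ (ha : a ∈ s) (hb : b ∈ s),
      ((G.deleteEdges F).induce s).Reachable ⟨a, ha⟩ ⟨b, hb⟩ := by
  intro a b p
  induction p with
  | nil => intro _ _ ha hb; exact Reachable.refl _
  | @cons u c w hadj q ih =>
    intro hs hf ha hb
    have hc : c ∈ s := hs c (by simp)
    have hadj' : ((G.deleteEdges F).induce s).Adj ⟨u, ha⟩ ⟨c, hc⟩ := by
      simp only [comap_adj, Function.Embedding.coe_subtype, deleteEdges_adj]
      exact ⟨hadj, hf _ (by simp)⟩
    exact hadj'.reachable.trans
      (ih (fun x hx => hs x (by simp [hx])) (fun e he => hf e (by simp [he])) hc hb)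

/-- Reachability in an induced subgraph of `G.deleteEdges F` matches `ReachIn`. -/
theorem reachIn_iff_reachable {x y : s} :
    ((G.deleteEdges F).induce s).Reachable x y ↔ ReachIn G s F x.1 y.1 := by
  constructor
  · intro h
    obtain ⟨p⟩ := h
    induction p with
    | @nil u => exact ReachIn.refl u.2
    | @cons u c w hadj q ih =>
      have hadj' : (G.deleteEdges F).Adj u.1 c.1 := hadj
      rw [deleteEdges_adj] at hadj'
      exact ReachIn.cons hadj'.1 u.2 hadj'.2 ih
  · rintro ⟨p, hs, hf⟩
    have := toReachable_aux p hs hf x.2 y.2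
    simpa using this

theorem reachIn_empty_iff_reachable {x y : s} :
    (G.induce s).Reachable x y ↔ ReachIn G s ∅ x.1 y.1 := by
  conv_lhs => rw [show G = G.deleteEdges ∅ from (deleteEdges_empty).symm]
  exact reachIn_iff_reachable

end API

section CORE
variable {V : Type*}

theorem edge_notMem {a b c d : V} (hh1 : a = c → b = d → False) (hh2 : a = d → b = c → False) :
    s(a,b) ∉ ({s(c,d)} : Set (Sym2 V)) := by
  intro h
  rw [Set.mem_singleton_iff, Sym2.eq_iff] at h
  rcases h with ⟨e1, e2⟩ | ⟨e1, e2⟩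
  exacts [hh1 e1 e2, hh2 e1 e2]

theorem core (G : SimpleGraph V)
    (hGc : ∀ w : V, (G.induce {u | u ≠ w}).Connected)
    (v x1 x2 y : V) (h1 : G.Adj v x1) (h2 : G.Adj v x2) (h12 : x1 ≠ x2)
    (hy : G.Adj v y) (hyx1 : y ≠ x1) (hyx2 : y ≠ x2)
    (hzex : ∃ z : V, ¬ ((G.deleteEdges {s(v,x2)}).induce {u | u ≠ z}).Connected) :
    ReachIn G {u | u ≠ x2} {s(v,x1)} v x1 := by
  by_contra hvx1
  have hvne1 : v ≠ x1 := h1.ne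
  have hvx2 : v ≠ x2 := h2.ne
  have hyv : y ≠ v := hy.ne'
  -- disjointness of the two sides of the bridge v-x1 in G - x2
  have hABdisj : ∀ u : V, ReachIn G {u | u ≠ x2} {s(v,x1)} u v →
      ReachIn G {u | u ≠ x2} {s(v,x1)} u x1 → False :=
    fun u ha hb => hvx1 (ha.symm.trans hb)
  have hABtot : ∀ u : V, u ≠ x2 → ReachIn G {u | u ≠ x2} {s(v,x1)} u v ∨
      ReachIn G {u | u ≠ x2} {s(v,x1)} u x1 := by
    intro u hu
    have hr : ReachIn G {u | u ≠ x2} ∅ u v :=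
      reachIn_empty_iff_reachable.mp ((hGc x2).preconnected ⟨u, hu⟩ ⟨v, hvx2⟩)
    exact hr.dichotomy (x1 := x1)
  obtain ⟨z, hzc⟩ := hzex
  have hzv : z ≠ v := by
    intro heq
    apply hzc
    rw [heq, connected_iff]
    constructor
    · rintro ⟨a, ha⟩ ⟨b, hb⟩
      rw [reachIn_iff_reachable]
      have hr : ReachIn G {u | u ≠ v} ∅ a b :=
        reachIn_empty_iff_reachable.mp ((hGc v).preconnected ⟨a, ha⟩ ⟨b, hb⟩)
      exact hr.avoid (by
        intro e he; rw [Set.mem_singleton_iff] at he; subst he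
        exact ⟨v, by simp, fun h => h rfl⟩)
    · exact ⟨⟨x1, h1.ne'⟩⟩
  have hzx2 : z ≠ x2 := by
    intro heq
    apply hzc
    rw [heq, connected_iff]
    constructor
    · rintro ⟨a, ha⟩ ⟨b, hb⟩
      rw [reachIn_iff_reachable]
      have hr : ReachIn G {u | u ≠ x2} ∅ a b :=
        reachIn_empty_iff_reachable.mp ((hGc x2).preconnected ⟨a, ha⟩ ⟨b, hb⟩)
      exact hr.avoid (by
        intro e he; rw [Set.mem_singleton_iff] at he; subst he
        exact ⟨x2, by simp, fun h => h rfl⟩)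
    · exact ⟨⟨v, hvx2⟩⟩
  have hDEtot : ∀ u : V, u ≠ z → ReachIn G {u | u ≠ z} {s(v,x2)} u v ∨
      ReachIn G {u | u ≠ z} {s(v,x2)} u x2 := by
    intro u hu
    have hr : ReachIn G {u | u ≠ z} ∅ u v :=
      reachIn_empty_iff_reachable.mp ((hGc z).preconnected ⟨u, hu⟩ ⟨v, hzv.symm⟩)
    exact hr.dichotomy (x1 := x2)
  have hDEdisj : ∀ u : V, ReachIn G {u | u ≠ z} {s(v,x2)} u v →
      ReachIn G {u | u ≠ z} {s(v,x2)} u x2 → False := by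
    intro u hd he
    apply hzc
    have hvz2 : ReachIn G {u | u ≠ z} {s(v,x2)} v x2 := hd.symm.trans he
    rw [connected_iff]
    constructor
    · rintro ⟨a, ha⟩ ⟨b, hb⟩
      rw [reachIn_iff_reachable]
      have ha' : ReachIn G {u | u ≠ z} {s(v,x2)} a v :=
        (hDEtot a ha).elim id (fun h => h.trans hvz2.symm)
      have hb' : ReachIn G {u | u ≠ z} {s(v,x2)} b v :=
        (hDEtot b hb).elim id (fun h => h.trans hvz2.symm)
      exact ha'.trans hb'.symm
    · exact ⟨⟨v, hzv.symm⟩⟩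
  have hAv : ReachIn G {u | u ≠ x2} {s(v,x1)} v v := ReachIn.refl hvx2
  have hBx1 : ReachIn G {u | u ≠ x2} {s(v,x1)} x1 x1 := ReachIn.refl h12
  have hDv : ReachIn G {u | u ≠ z} {s(v,x2)} v v := ReachIn.refl hzv.symm
  have hEx2 : ReachIn G {u | u ≠ z} {s(v,x2)} x2 x2 := ReachIn.refl hzx2.symm
  have hAy : ReachIn G {u | u ≠ x2} {s(v,x1)} y v :=
    ReachIn.single hy.symm hyx2 hvx2
      (edge_notMem (fun h _ => hyv h) (fun h _ => hyx1 h))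
  rcases hABtot z hzx2 with hzA | hzB
  · -- z is on the v-side (A)
    have hx1z : x1 ≠ z := fun h => hABdisj z hzA (by rw [← h]; exact hBx1)
    have trB : ∀ b : V, ReachIn G {u | u ≠ x2} {s(v,x1)} b x1 →
        ReachIn G {u | u ≠ z} {s(v,x2)} b x1 := by
      intro b hb
      have h1' := hb.strengthen
      have h2' := h1'.avoid (F' := {s(v,x2)}) (by
        intro e he; rw [Set.mem_singleton_iff] at he; subst he
        exact ⟨x2, by simp, fun h => h.1 rfl⟩)
      refine h2'.mono_s ?_
      rintro u ⟨hu1, hu2⟩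
      intro heq
      rw [heq] at hu2
      exact hABdisj z hzA hu2
    rcases hDEtot x1 hx1z with hx1D | hx1E
    · -- x1 on v-side of the v-x2 bridge: B ⊆ D
      have hBD : ∀ b : V, ReachIn G {u | u ≠ x2} {s(v,x1)} b x1 →
          ReachIn G {u | u ≠ z} {s(v,x2)} b v := fun b hb => (trB b hb).trans hx1D
      have key : ∀ (u w : V) (p : G.Walk u w), w = x2 → (∀ x ∈ p.support, x ≠ v) →
          ReachIn G {u | u ≠ x2} {s(v,x1)} u x1 → False := by
        intro u w p
        induction p with
        | nil =>
          intro heq _ hu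
          exact hu.left_mem heq
        | @cons u' c w' hadj q ih =>
          intro heq hsup hu
          have hunv : u' ≠ v := hsup u' (by simp)
          have hcnv : c ≠ v := hsup c (by simp)
          by_cases hcx2 : c = x2
          · have hadj' : G.Adj u' x2 := by rw [← hcx2]; exact hadj
            by_cases hE : s(u', x2) = s(v, x2)
            · rcases Sym2.eq_iff.mp hE with ⟨e1, _⟩ | ⟨_, e2⟩
              · exact hunv e1
              · exact hvx2 e2.symm
            · have hu'z : u' ≠ z := (hBD u' hu).left_mem
              have : ReachIn G {u | u ≠ z} {s(v,x2)} u' x2 :=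
                ReachIn.single hadj' hu'z hzx2.symm (by
                  rw [Set.mem_singleton_iff]; exact hE)
              exact hDEdisj u' (hBD u' hu) this
          · rcases hABtot c hcx2 with hcA | hcB
            · by_cases hE : s(u', c) = s(v, x1)
              · rcases Sym2.eq_iff.mp hE with ⟨e1, _⟩ | ⟨_, e2⟩
                · exact hunv e1
                · exact hcnv e2
              · have hcB : ReachIn G {u | u ≠ x2} {s(v,x1)} c x1 :=
                  (ReachIn.single hadj.symm hcx2 hu.left_mem (by
                    rw [Set.mem_singleton_iff, Sym2.eq_swap]; exact hE)).trans hu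
                exact hABdisj c hcA hcB
            · exact ih heq (fun x hx => hsup x (by simp [hx])) hcB
      have hr : ReachIn G {u | u ≠ v} ∅ x1 x2 :=
        reachIn_empty_iff_reachable.mp ((hGc v).preconnected ⟨x1, h1.ne'⟩ ⟨x2, h2.ne'⟩)
      obtain ⟨p, hsup, -⟩ := hr
      exact key x1 x2 p rfl (fun x hx => hsup x hx) hBx1
    · -- x1 on x2-side: direct contradiction via the edge v-x1
      have : ReachIn G {u | u ≠ z} {s(v,x2)} v x2 :=
        (ReachIn.single h1 hzv.symm hx1z
          (edge_notMem (fun _ h => h12 h) (fun h _ => hvx2 h))).trans hx1E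
      exact hDEdisj v hDv this
  · -- z is on the x1-side (B)
    have hzx2' : z ≠ x2 := hzB.left_mem
    have hx2z : x2 ≠ z := hzx2'.symm
    have trA : ∀ a : V, ReachIn G {u | u ≠ x2} {s(v,x1)} a v →
        ReachIn G {u | u ≠ z} {s(v,x2)} a v := by
      intro a ha
      have h1' := ha.strengthen
      have h2' := h1'.avoid (F' := {s(v,x2)}) (by
        intro e he; rw [Set.mem_singleton_iff] at he; subst he
        exact ⟨x2, by simp, fun h => h.1 rfl⟩)
      refine h2'.mono_s ?_
      rintro u ⟨hu1, hu2⟩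
      intro heq
      rw [heq] at hu2
      exact hABdisj z hu2 hzB
    have key2 : ∀ (u w : V) (p : G.Walk u w), w = y → (∀ x ∈ p.support, x ≠ v) →
        (ReachIn G {u | u ≠ x2} {s(v,x1)} u x1 ∨ u = x2) → False := by
      intro u w p
      induction p with
      | nil =>
        intro heq _ hu
        rcases hu with hu | hu
        · rw [heq] at hu; exact hABdisj y hAy hu
        · exact hyx2 (heq.symm.trans hu)
      | @cons u' c w' hadj q ih =>
        intro heq hsup hu
        have hunv : u' ≠ v := hsup u' (by simp)
        have hcnv : c ≠ v := hsup c (by simp)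
        rcases hu with hBu | hux2
        · by_cases hcx2 : c = x2
          · exact ih heq (fun x hx => hsup x (by simp [hx])) (Or.inr hcx2)
          · rcases hABtot c hcx2 with hcA | hcB
            · by_cases hE : s(u', c) = s(v, x1)
              · rcases Sym2.eq_iff.mp hE with ⟨e1, _⟩ | ⟨_, e2⟩
                · exact hunv e1
                · exact hcnv e2
              · have hcB : ReachIn G {u | u ≠ x2} {s(v,x1)} c x1 :=
                  (ReachIn.single hadj.symm hcx2 hBu.left_mem (by
                    rw [Set.mem_singleton_iff, Sym2.eq_swap]; exact hE)).trans hBu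
                exact hABdisj c hcA hcB
            · exact ih heq (fun x hx => hsup x (by simp [hx])) (Or.inl hcB)
        · -- u' = x2
          have hadj2 : G.Adj x2 c := by rw [← hux2]; exact hadj
          by_cases hcz : c = z
          · refine ih heq (fun x hx => hsup x (by simp [hx])) (Or.inl ?_)
            rw [hcz]; exact hzB
          · by_cases hE : s(x2, c) = s(v, x2)
            · rcases Sym2.eq_iff.mp hE with ⟨e1, _⟩ | ⟨_, e2⟩
              · exact hvx2 e1.symm
              · exact hcnv e2
            · have hEc : ReachIn G {u | u ≠ z} {s(v,x2)} c x2 :=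
                ReachIn.single hadj2.symm hcz hx2z (by
                  rw [Set.mem_singleton_iff, Sym2.eq_swap]; exact hE)
              have hcx2' : c ≠ x2 := hadj2.ne'
              rcases hABtot c hcx2' with hcA | hcB
              · exact hDEdisj c (trA c hcA) hEc
              · exact ih heq (fun x hx => hsup x (by simp [hx])) (Or.inl hcB)
    have hr : ReachIn G {u | u ≠ v} ∅ x1 y :=
      reachIn_empty_iff_reachable.mp ((hGc v).preconnected ⟨x1, h1.ne'⟩ ⟨y, hyv⟩)
    obtain ⟨p, hsup, -⟩ := hr
    exact key2 x1 y p rfl (fun x hx => hsup x hx) (Or.inl hBx1)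

end CORE

theorem stmt1 {V : Type*} [Fintype V] (G : SimpleGraph V)
    (hG : StrictTwoConnected G) (hcard : 4 ≤ Nat.card V)
    (v x1 x2 : V) (h1 : G.Adj v x1) (h2 : G.Adj v x2) (h12 : x1 ≠ x2)
    (hdeg : 3 ≤ (G.neighborSet v).ncard)
    (hc1 : IsCriticalEdge G s(v, x1)) (hc2 : IsCriticalEdge G s(v, x2)) :
    StrictTwoConnected ((G.deleteEdges {s(v, x1)}) ⊔ fromEdgeSet {s(x1, x2)}) := by
  obtain ⟨h3, hGc⟩ := hG
  have hvx1 : v ≠ x1 := h1.ne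
  have hvx2 : v ≠ x2 := h2.ne
  obtain ⟨y, hy, hyx1, hyx2⟩ : ∃ y, G.Adj v y ∧ y ≠ x1 ∧ y ≠ x2 := by
    by_contra h
    push_neg at h
    have hsub : G.neighborSet v ⊆ {x1, x2} := by
      intro u hu
      by_cases hux1 : u = x1
      · exact Or.inl hux1
      · exact Or.inr (h u hu hux1)
    have h2' : (G.neighborSet v).ncard ≤ 2 := by
      have := Set.ncard_le_ncard hsub (Set.toFinite _)
      rwa [Set.ncard_pair h12] at this
    omega
  set Gp := G ⊔ fromEdgeSet {s(x1,x2)} with hGpdef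
  have hle : G ≤ Gp := le_sup_left
  have hGeq : G.deleteEdges {s(v,x1)} ⊔ fromEdgeSet {s(x1,x2)} = Gp.deleteEdges {s(v,x1)} := by
    ext a b
    simp only [Gp, sup_adj, deleteEdges_adj, fromEdgeSet_adj, Set.mem_singleton_iff]
    constructor
    · rintro (⟨h, hne⟩ | ⟨he, hne⟩)
      · exact ⟨Or.inl h, hne⟩
      · refine ⟨Or.inr ⟨he, hne⟩, ?_⟩
        rw [he]
        intro hh
        rcases Sym2.eq_iff.mp hh with ⟨e1, _⟩ | ⟨_, e2⟩
        · exact hvx1 e1.symm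
        · exact hvx2 e2.symm
    · rintro ⟨h | h, hne⟩
      · exact Or.inl ⟨h, hne⟩
      · exact Or.inr ⟨h.1, h.2⟩
  refine ⟨by omega, ?_⟩
  intro w
  rw [hGeq, connected_iff]
  constructor
  · -- preconnected
    rintro ⟨a, ha⟩ ⟨b, hb⟩
    rw [reachIn_iff_reachable]
    -- goal : ReachIn Gp {u | u ≠ w} {s(v,x1)} a b
    by_cases hwv : w = v
    · subst hwv
      have hr : ReachIn G {u | u ≠ w} ∅ a b :=
        reachIn_empty_iff_reachable.mp ((hGc w).preconnected ⟨a, ha⟩ ⟨b, hb⟩)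
      refine (hr.avoid ?_).mono_graph hle
      intro e he; rw [Set.mem_singleton_iff] at he; subst he
      exact ⟨w, by simp, fun h => h rfl⟩
    · by_cases hwx1 : w = x1
      · subst hwx1
        have hr : ReachIn G {u | u ≠ w} ∅ a b :=
          reachIn_empty_iff_reachable.mp ((hGc w).preconnected ⟨a, ha⟩ ⟨b, hb⟩)
        refine (hr.avoid ?_).mono_graph hle
        intro e he; rw [Set.mem_singleton_iff] at he; subst he
        exact ⟨w, by simp, fun h => h rfl⟩
      · have hvw : v ≠ w := fun h => hwv h.symm
        have hx1w : x1 ≠ w := fun h => hwx1 h.symm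
        have hub : ReachIn Gp {u | u ≠ w} {s(v,x1)} v x1 := by
          by_cases hwx2 : w = x2
          · subst hwx2
            have hzex : ∃ z : V, ¬ ((G.deleteEdges {s(v,w)}).induce {u | u ≠ z}).Connected := by
              by_contra hcon
              push_neg at hcon
              exact hc2.2 ⟨by omega, hcon⟩
            exact (core G hGc v x1 w y h1 h2 h12 hy hyx1 hyx2 hzex).mono_graph hle
          · have hx2w : x2 ≠ w := fun h => hwx2 h.symm
            have e1 : ReachIn Gp {u | u ≠ w} {s(v,x1)} v x2 :=
              ReachIn.single (hle h2) hvw hx2w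
                (edge_notMem (fun _ h => h12 h.symm) (fun h _ => hvx1 h))
            have e2 : ReachIn Gp {u | u ≠ w} {s(v,x1)} x2 x1 := by
              refine ReachIn.single ?_ hx2w hx1w
                (edge_notMem (fun h _ => hvx2 h.symm) (fun h _ => h12 h.symm))
              exact (sup_adj _ _ _ _).mpr (Or.inr ((fromEdgeSet_adj _).mpr
                ⟨by rw [Set.mem_singleton_iff]; exact Sym2.eq_swap, h12.symm⟩))
            exact e1.trans e2
        have step : ∀ c : V, c ≠ w → ReachIn Gp {u | u ≠ w} {s(v,x1)} c v := by
          intro c hc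
          have hr : ReachIn G {u | u ≠ w} ∅ c v :=
            reachIn_empty_iff_reachable.mp ((hGc w).preconnected ⟨c, hc⟩ ⟨v, hvw⟩)
          rcases hr.dichotomy (x1 := x1) with h | h
          · exact h.mono_graph hle
          · exact (h.mono_graph hle).trans hub.symm
        exact (step a ha).trans (step b hb).symm
  · -- nonempty
    have hnt : Nontrivial V := by
      have hc' := hcard
      rw [Nat.card_eq_fintype_card] at hc'
      exact Fintype.one_lt_card_iff_nontrivial.mp (by omega)
    obtain ⟨u, hu⟩ := exists_ne w
    exact ⟨⟨u, hu⟩⟩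
end
end

section
/- An edge e of a 2-connected graph G is critical (i.e., G - e is not 2-connected) if and only if e is not a chord of any cycle of G, where a chord of a cycle is an edge joining two vertices of the cycle that is not an edge of the cycle. -/
open SimpleGraph Sum

noncomputable section

section AuxLemmas
variable {V : Type*}

/-- Lift reachability along a pointwise adjacency-to-reachability map. -/
lemma reachable_of_adj_imp {A : Type*} {G₁ G₂ : SimpleGraph A}
    (h : ∀ a b : A, G₁.Adj a b → G₂.Reachable a b) {a b : A} (hr : G₁.Reachable a b) :
    G₂.Reachable a b := by
  obtain ⟨p⟩ := hr
  induction p with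
  | nil => exact Reachable.refl _
  | cons hadj _ ih => exact (h _ _ hadj).trans ih

/-- A walk whose support lies in `S` gives reachability in the induced graph. -/
lemma reach_induce {G : SimpleGraph V} {S : Set V} :
    ∀ {u w : V} (p : G.Walk u w), (∀ z ∈ p.support, z ∈ S) → ∀ (hu : u ∈ S) (hw : w ∈ S),
      (G.induce S).Reachable ⟨u, hu⟩ ⟨w, hw⟩ := by
  intro u w p
  induction p with
  | nil => intro _ hu hw; exact Reachable.refl _
  | @cons u b w hadj q ih =>
    intro hs hu hw
    have hb : b ∈ S := hs b (by simp)
    have h1 : (G.induce S).Adj ⟨u, hu⟩ ⟨b, hb⟩ := by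
      simp only [comap_adj, Function.Embedding.coe_subtype]
      exact hadj
    exact h1.reachable.trans (ih (fun z hz => hs z (by simp [hz])) hb hw)

/-- A walk in an induced graph comes from a walk in `G` with support in `S`. -/
lemma walk_of_induce {G : SimpleGraph V} {S : Set V} :
    ∀ {a b : S} (p : (G.induce S).Walk a b), ∃ q : G.Walk a.1 b.1, ∀ z ∈ q.support, z ∈ S := by
  intro a b p
  induction p with
  | @nil u => exact ⟨Walk.nil, by rintro z hz; simp at hz; subst hz; exact u.2⟩
  | @cons a c b hadj q ih =>
    obtain ⟨q', hq'⟩ := ih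
    have hadj' : G.Adj a.1 c.1 := hadj
    refine ⟨Walk.cons hadj' q', ?_⟩
    intro z hz
    rcases List.mem_cons.mp (by simpa using hz) with h | h
    · subst h; exact a.2
    · exact hq' z h

/-- First point where a path meets a set `T` (the endpoint is in `T`). -/
lemma first_hit {G : SimpleGraph V} (T : Set V) :
    ∀ {y x : V} (P : G.Walk y x), P.IsPath → x ∈ T →
      ∃ (z : V) (Q : G.Walk y z), z ∈ T ∧ Q.IsPath ∧ (∀ u ∈ Q.support, u ∈ P.support) ∧
        (∀ u ∈ Q.support, u ∈ T → u = z) := by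
  classical
  intro y x P
  induction P with
  | @nil u =>
    intro _ hx
    exact ⟨u, Walk.nil, hx, Walk.IsPath.nil, by simp, by simp⟩
  | @cons y b x hadj P' ih =>
    intro hP hx
    by_cases hy : y ∈ T
    · refine ⟨y, Walk.nil, hy, Walk.IsPath.nil, by simp, by simp⟩
    · obtain ⟨z, Q', hzT, hQ'path, hQ'sub, hQ'last⟩ :=
        ih ((Walk.cons_isPath_iff _ _).mp hP).1 hx
      have hynotin : y ∉ Q'.support := fun h =>
        ((Walk.cons_isPath_iff _ _).mp hP).2 (hQ'sub y h)
      refine ⟨z, Walk.cons hadj Q', hzT, (Walk.cons_isPath_iff _ _).mpr ⟨hQ'path, hynotin⟩,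
        ?_, ?_⟩
      · intro u hu
        rcases List.mem_cons.mp (by simpa using hu) with h | h
        · subst h; simp
        · simp [hQ'sub u h]
      · intro u hu huT
        rcases List.mem_cons.mp (by simpa using hu) with h | h
        · exact absurd (h ▸ huT) hy
        · exact hQ'last u h huT

/-- Membership in the support of a rotated closed walk. -/
lemma mem_support_rotate_iff [DecidableEq V] {G : SimpleGraph V} {v u z : V} (c : G.Walk v v)
    (h : u ∈ c.support) : z ∈ (c.rotate u h).support ↔ z ∈ c.support := by
  unfold Walk.rotate
  rw [Walk.mem_support_append_iff]
  constructor
  · rintro (hz | hz)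
    · exact Walk.support_dropUntil_subset _ _ hz
    · exact Walk.support_takeUntil_subset _ _ hz
  · intro hz
    have := Walk.take_spec c h
    conv at hz => rw [← this]
    rw [Walk.mem_support_append_iff] at hz
    rcases hz with hz | hz
    · rcases List.mem_cons.mp ((c.takeUntil u h).support_eq_cons ▸ hz) with h1 | h1
      · subst h1
        exact Or.inl ((c.dropUntil u h).end_mem_support)
      · right
        rw [Walk.support_eq_cons]
        exact List.mem_cons_of_mem _ h1
    · exact Or.inl hz


/-- From a cycle through `x` and `y`, extract a walk from `x` to `y` avoiding a vertex
`v` different from `x, y`, using only edges of the cycle. -/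
lemma exists_walk_avoiding [DecidableEq V] {G : SimpleGraph V} {a x y v : V} (c : G.Walk a a)
    (hc : c.IsCycle) (hx : x ∈ c.support) (hy : y ∈ c.support)
    (hvx : v ≠ x) (hvy : v ≠ y) :
    ∃ r : G.Walk x y, (∀ z ∈ r.support, z ≠ v) ∧ (∀ f ∈ r.edges, f ∈ c.edges) := by
  set d := c.rotate x hx with hd
  have hdc : d.IsCycle := hc.rotate hx
  have hyd : y ∈ d.support := (mem_support_rotate_iff c hx).mpr hy
  have hedges : ∀ f, f ∈ d.edges → f ∈ c.edges := fun f hf => (c.rotate_edges x hx).mem_iff.mp hf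
  by_cases hv : v ∈ d.support
  · -- v lies on the cycle
    have hnd : d.support.tail.Nodup := hdc.2
    have hvtail : v ∈ d.support.tail := by
      rcases List.mem_cons.mp (d.support_eq_cons ▸ hv) with h | h
      · exact absurd h hvx
      · exact h
    have hcount : d.support.count v = 1 := by
      rw [d.support_eq_cons, List.count_cons, List.count_eq_one_of_mem hnd hvtail]
      simp [hvx.symm]
    by_cases hyt : y ∈ (d.takeUntil v hv).support
    · -- y appears before v
      set t := d.takeUntil v hv with ht
      set r := t.takeUntil y hyt with hr
      have hvr : v ∉ r.support := by
        intro hvr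
        have hsplit : t.support = r.support ++ (t.dropUntil y hyt).support.tail := by
          conv_lhs => rw [← Walk.take_spec t hyt]
          rw [Walk.support_append]
        have hvdrop : v ∈ (t.dropUntil y hyt).support.tail := by
          rcases List.mem_cons.mp ((t.dropUntil y hyt).support_eq_cons ▸
            (t.dropUntil y hyt).end_mem_support) with h | h
          · exact absurd h hvy
          · exact h
        have hc1 : t.support.count v = 1 := d.count_support_takeUntil_eq_one hv
        rw [hsplit, List.count_append] at hc1
        have h2 : List.count v (t.dropUntil y hyt).support.tail ≠ 0 :=
          fun h => (List.count_eq_zero.mp h) hvdrop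
        have h3 : r.support.count v ≠ 0 := fun h => (List.count_eq_zero.mp h) hvr
        omega
      refine ⟨r, fun z hz hzv => hvr (hzv ▸ hz), fun f hf =>
        hedges f (d.edges_takeUntil_subset hv (t.edges_takeUntil_subset hyt hf))⟩
    · -- y appears after v
      set t := d.takeUntil v hv with ht
      set dr := d.dropUntil v hv with hdr
      have hsplit : d.support = t.support ++ dr.support.tail := by
        conv_lhs => rw [← Walk.take_spec d hv]
        rw [Walk.support_append]
      have hydr : y ∈ dr.support := by
        rw [hsplit, List.mem_append] at hyd
        rcases hyd with h | h
        · exact absurd h hyt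
        · exact List.mem_of_mem_tail h
      set r0 := dr.dropUntil y hydr with hr0
      have hvdrtail : dr.support.tail.count v = 0 := by
        have hc1 : t.support.count v = 1 := d.count_support_takeUntil_eq_one hv
        have := hcount
        rw [hsplit, List.count_append] at this
        omega
      have hvr0 : v ∉ r0.support := by
        intro hvr0
        have hvr0t : v ∈ r0.support.tail := by
          rcases List.mem_cons.mp (r0.support_eq_cons ▸ hvr0) with h | h
          · exact absurd h hvy
          · exact h
        have hsplit2 : dr.support = (dr.takeUntil y hydr).support ++ r0.support.tail := by
          conv_lhs => rw [← Walk.take_spec dr hydr]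
          rw [Walk.support_append]
        have : dr.support.tail = (dr.takeUntil y hydr).support.tail ++ r0.support.tail := by
          rw [hsplit2, (dr.takeUntil y hydr).support_eq_cons]
          simp
        rw [this] at hvdrtail
        have : v ∈ (dr.takeUntil y hydr).support.tail ++ r0.support.tail :=
          List.mem_append_right _ hvr0t
        exact (List.count_eq_zero.mp hvdrtail) this
      refine ⟨r0.reverse, ?_, ?_⟩
      · intro z hz hzv
        rw [Walk.support_reverse, List.mem_reverse] at hz
        exact hvr0 (hzv ▸ hz)
      · intro f hf
        rw [Walk.edges_reverse, List.mem_reverse] at hf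
        exact hedges f (d.edges_dropUntil_subset hv (dr.edges_dropUntil_subset hydr hf))
  · -- v not on the cycle: just take the initial segment to y
    refine ⟨d.takeUntil y hyd, ?_, ?_⟩
    · intro z hz hzv
      exact hv (hzv ▸ d.support_takeUntil_subset hyd hz)
    · intro f hf
      exact hedges f (d.edges_takeUntil_subset hyd hf)

lemma cycle_through_pair {V : Type*} [Fintype V] {G : SimpleGraph V}
    (h3 : 3 ≤ Fintype.card V) (h2 : ∀ v : V, (G.induce {w | w ≠ v}).Connected)
    {x y : V} (hxy : x ≠ y) :
    ∃ (a : V) (c : G.Walk a a), c.IsCycle ∧ x ∈ c.support ∧ y ∈ c.support := by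
  classical
  have hne : Nonempty V := Fintype.card_pos_iff.mp (by omega)
  have hex3 : ∀ a b : V, ∃ z : V, z ≠ a ∧ z ≠ b := by
    intro a b
    by_contra h
    push_neg at h
    have hsub : (Finset.univ : Finset V) ⊆ {a, b} := by
      intro z _
      by_cases hz : z = a
      · simp [hz]
      · simp [h z hz]
    have := Finset.card_le_card hsub
    have h2' : ({a, b} : Finset V).card ≤ 2 := Finset.card_insert_le _ _ |>.trans (by simp)
    simp [Finset.card_univ] at this
    omega
  have havoid : ∀ v a b : V, a ≠ v → b ≠ v →
      ∃ p : G.Walk a b, p.IsPath ∧ ∀ z ∈ p.support, z ≠ v := by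
    intro v a b ha hb
    obtain ⟨pw⟩ := (h2 v).preconnected ⟨a, ha⟩ ⟨b, hb⟩
    obtain ⟨q, hq⟩ := walk_of_induce pw
    exact ⟨q.bypass, q.bypass_isPath, fun z hz => hq z (q.support_bypass_subset hz)⟩
  have hconn : G.Connected := by
    have hpre : G.Preconnected := by
      intro a b
      by_cases hab : a = b
      · exact hab ▸ Reachable.refl a
      · obtain ⟨z, hza, hzb⟩ := hex3 a b
        obtain ⟨p, _, _⟩ := havoid z a b (Ne.symm hza) (Ne.symm hzb)
        exact ⟨p⟩
    exact Connected.mk hpre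
  suffices key : ∀ (n : ℕ) (x y : V), x ≠ y → G.dist x y = n →
      ∃ (a : V) (c : G.Walk a a), c.IsCycle ∧ x ∈ c.support ∧ y ∈ c.support by
    exact key _ x y hxy rfl
  intro n
  induction n using Nat.strong_induction_on with
  | _ n ih =>
    obtain _ | _ | m := n
    · intro x y hxy hdist
      rcases dist_eq_zero_iff_eq_or_not_reachable.mp hdist with h | h
      · exact absurd h hxy
      · exact absurd (hconn.preconnected x y) h
    · intro x y hxy hdist
      obtain ⟨p, hp, hlen⟩ := hconn.exists_path_of_dist x y
      rw [hdist] at hlen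
      -- extract adjacency
      have hadj : G.Adj x y := by
        cases p with
        | nil => simp at hlen
        | @cons _ w _ h q =>
          cases q with
          | nil => exact h
          | cons h2 q2 => simp [Walk.length_cons] at hlen
      obtain ⟨z, hzx, hzy⟩ := hex3 x y
      obtain ⟨p1, _, hp1av⟩ := havoid y x z hxy hzy
      obtain ⟨p2, _, hp2av⟩ := havoid x z y hzx (Ne.symm hxy)
      set q := p1.append p2 with hqdef
      have hq : s(x, y) ∉ q.edges := by
        intro hmem
        rw [Walk.edges_append, List.mem_append] at hmem
        rcases hmem with h | h
        · exact hp1av y (p1.snd_mem_support_of_mem_edges h) rfl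
        · exact hp2av x (p2.fst_mem_support_of_mem_edges h) rfl
      refine ⟨y, Walk.cons hadj.symm q.bypass, ?_, ?_, ?_⟩
      · refine (Walk.cons_isCycle_iff _ hadj.symm).mpr ⟨q.bypass_isPath, ?_⟩
        intro hmem
        rw [Sym2.eq_swap] at hmem
        exact hq (q.edges_bypass_subset hmem)
      · rw [Walk.support_cons]
        exact List.mem_cons_of_mem _ q.bypass.start_mem_support
      · rw [Walk.support_cons]
        exact List.mem_cons_self
    · intro x y hxy hdist
      obtain ⟨p, hp, hlen⟩ := hconn.exists_path_of_dist x y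
      rw [hdist] at hlen
      cases p with
      | nil => simp at hlen
      | @cons _ w _ hxw q =>
        have hqlen : q.length = m + 1 := by simpa using hlen
        have hdxw : G.dist x w ≤ 1 := le_trans (dist_le (Walk.cons hxw Walk.nil)) (by simp)
        have hdwy_le : G.dist w y ≤ m + 1 := hqlen ▸ dist_le q
        have hdwy : G.dist w y = m + 1 := by
          have htri := hconn.dist_triangle (u := x) (v := w) (w := y)
          rw [hdist] at htri
          omega
        have hwy : w ≠ y := by
          intro h
          subst h
          simp [SimpleGraph.dist_self] at hdwy
        obtain ⟨a, C, hC, hwC, hyC⟩ := ih (m + 1) (by omega) w y hwy hdwy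
        by_cases hxC : x ∈ C.support
        · exact ⟨a, C, hC, hxC, hyC⟩
        · have hxw' : x ≠ w := G.ne_of_adj hxw
          obtain ⟨P, hPpath, hPav⟩ := havoid w x y hxw' (Ne.symm hwy)
          set D := C.rotate w hwC with hDdef
          have hD : D.IsCycle := hC.rotate hwC
          have hyD : y ∈ D.support := (mem_support_rotate_iff C hwC).mpr hyC
          have hxD : x ∉ D.support := fun h => hxC ((mem_support_rotate_iff C hwC).mp h)
          obtain ⟨z, Q, hzT, hQpath, hQsub, hQlast⟩ :=
            first_hit {u | u ∈ D.support} P hPpath hyD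
          have hzD : z ∈ D.support := hzT
          have hQavW : ∀ u ∈ Q.support, u ≠ w := fun u hu => hPav u (hQsub u hu)
          have hzw : z ≠ w := hQavW z Q.end_mem_support
          set D1 := D.takeUntil z hzD with hD1def
          set D2 := D.dropUntil z hzD with hD2def
          have hsplit : D.support = D1.support ++ D2.support.tail := by
            conv_lhs => rw [← Walk.take_spec D hzD]
            rw [Walk.support_append]
          have htail : D.support.tail = D1.support.tail ++ D2.support.tail := by
            rw [hsplit, D1.support_eq_cons]
            simp
          have hnd : (D1.support.tail ++ D2.support.tail).Nodup := htail ▸ hD.2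
          have hdisj := List.disjoint_of_nodup_append hnd
          have hwD2t : w ∈ D2.support.tail := by
            rcases List.mem_cons.mp (D2.support_eq_cons ▸ D2.end_mem_support) with h | h
            · exact absurd h (Ne.symm hzw)
            · exact h
          have hzD1t : z ∈ D1.support.tail := by
            rcases List.mem_cons.mp (D1.support_eq_cons ▸ D1.end_mem_support) with h | h
            · exact absurd h hzw
            · exact h
          have hD1path : D1.IsPath := by
            rw [Walk.isPath_def, D1.support_eq_cons]
            exact List.nodup_cons.mpr
              ⟨fun hmem => hdisj hmem hwD2t, hnd.of_append_left⟩
          have hD2path : D2.IsPath := by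
            rw [Walk.isPath_def, D2.support_eq_cons]
            exact List.nodup_cons.mpr
              ⟨fun hmem => hdisj hzD1t hmem, hnd.of_append_right⟩
          obtain ⟨R, hRpath, hyR, hRsub⟩ : ∃ R : G.Walk w z, R.IsPath ∧ y ∈ R.support ∧
              ∀ u ∈ R.support, u ∈ D.support := by
            by_cases hyD1 : y ∈ D1.support
            · exact ⟨D1, hD1path, hyD1, fun u hu => D.support_takeUntil_subset hzD hu⟩
            · have hyD2 : y ∈ D2.support := by
                rw [hsplit, List.mem_append] at hyD
                rcases hyD with h | h
                · exact absurd h hyD1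
                · exact List.mem_of_mem_tail h
              refine ⟨D2.reverse, hD2path.reverse, ?_, ?_⟩
              · rwa [Walk.support_reverse, List.mem_reverse]
              · intro u hu
                rw [Walk.support_reverse, List.mem_reverse] at hu
                exact D.support_dropUntil_subset hzD hu
          set B := R.append Q.reverse with hBdef
          have hzQrt : z ∉ Q.reverse.support.tail := by
            have : Q.reverse.support.Nodup := hQpath.reverse.2
            rw [Q.reverse.support_eq_cons] at this
            exact (List.nodup_cons.mp this).1
          have hBpath : B.IsPath := by
            rw [Walk.isPath_def, Walk.support_append]
            refine List.Nodup.append ((Walk.isPath_def _).mp hRpath)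
              (((Walk.isPath_def _).mp hQpath.reverse).tail) ?_
            intro u hu1 hu2
            have huQ : u ∈ Q.support := by
              rw [← List.mem_reverse, ← Walk.support_reverse]
              exact List.mem_of_mem_tail hu2
            have : u = z := hQlast u huQ (hRsub u hu1)
            exact hzQrt (this ▸ hu2)
          have hBedge : s(x, w) ∉ B.edges := by
            intro hmem
            rw [Walk.edges_append, List.mem_append] at hmem
            rcases hmem with h | h
            · exact hxD (hRsub x (R.fst_mem_support_of_mem_edges h))
            · rw [Walk.edges_reverse, List.mem_reverse] at h
              exact hQavW w (Q.snd_mem_support_of_mem_edges h) rfl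
          refine ⟨x, Walk.cons hxw B, (Walk.cons_isCycle_iff B hxw).mpr ⟨hBpath, hBedge⟩,
            ?_, ?_⟩
          · exact (Walk.cons hxw B).start_mem_support
          · rw [Walk.support_cons]
            refine List.mem_cons_of_mem _ ?_
            rw [hBdef, Walk.mem_support_append_iff]
            exact Or.inl hyR

/-- Deleting a chord keeps the vertex-deleted graphs connected. -/
lemma del_conn {V : Type*} {G : SimpleGraph V} {x y v : V} (hvx : v ≠ x) (hvy : v ≠ y)
    (hconn : (G.induce {w | w ≠ v}).Connected) (r : G.Walk x y)
    (hr1 : ∀ z ∈ r.support, z ≠ v) (hr2 : s(x, y) ∉ r.edges) :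
    ((G.deleteEdges {s(x, y)}).induce {w | w ≠ v}).Connected := by
  classical
  set S : Set V := {w | w ≠ v} with hS
  have hxS : x ∈ S := Ne.symm hvx
  have hyS : y ∈ S := Ne.symm hvy
  have hrdel : ∀ f ∈ r.edges, f ∉ ({s(x, y)} : Set (Sym2 V)) := by
    intro f hf hfe
    rw [Set.mem_singleton_iff] at hfe
    exact hr2 (hfe ▸ hf)
  set r' := r.toDeleteEdges {s(x, y)} hrdel with hr'
  have hr'supp : ∀ z ∈ r'.support, z ∈ S := by
    intro z hz
    rw [hr', Walk.toDeleteEdges, Walk.support_transfer] at hz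
    exact hr1 z hz
  have hreach : ((G.deleteEdges {s(x, y)}).induce S).Reachable ⟨x, hxS⟩ ⟨y, hyS⟩ :=
    reach_induce r' hr'supp hxS hyS
  have hpre : ((G.deleteEdges {s(x, y)}).induce S).Preconnected := by
    intro p₁ p₂
    refine reachable_of_adj_imp ?_ (hconn.preconnected p₁ p₂)
    rintro ⟨a1, ha1⟩ ⟨b1, hb1⟩ hadj
    have hadjG : G.Adj a1 b1 := hadj
    by_cases heq : s(a1, b1) = s(x, y)
    · rcases Sym2.eq_iff.mp heq with ⟨rfl, rfl⟩ | ⟨rfl, rfl⟩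
      · exact hreach
      · exact hreach.symm
    · refine Adj.reachable ?_
      show (G.deleteEdges {s(x, y)}).Adj a1 b1
      exact deleteEdges_adj.mpr ⟨hadjG, by simpa using heq⟩
  have hnon : Nonempty ↥S := hconn.nonempty
  exact Connected.mk hpre

end AuxLemmas

theorem stmt2 {V : Type*} [Fintype V] (G : SimpleGraph V)
    (hG : StrictTwoConnected G) (hcard : 4 ≤ Nat.card V)
    (e : Sym2 V) (he : e ∈ G.edgeSet) :
    IsCriticalEdge G e ↔
      ¬ ∃ (a : V) (c : G.Walk a a) (x y : V), c.IsCycle ∧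
          x ∈ c.support ∧ y ∈ c.support ∧ e = s(x, y) ∧ e ∉ c.edges := by
  classical
  revert he
  induction e using Sym2.ind with
  | _ x y =>
  intro he
  have hadj : G.Adj x y := he
  have hxy : x ≠ y := G.ne_of_adj hadj
  constructor
  · rintro ⟨_, hcrit⟩ ⟨a, c, x', y', hc, hx', hy', heq, hce⟩
    apply hcrit
    have hadj' : G.Adj x' y' := by
      have : s(x', y') ∈ G.edgeSet := heq ▸ he
      exact this
    refine ⟨by omega, fun v => ?_⟩
    rw [show ({s(x, y)} : Set (Sym2 V)) = {s(x', y')} by rw [heq]]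
    by_cases hv : v = x' ∨ v = y'
    · have hEq : (G.deleteEdges {s(x', y')}).induce {w | w ≠ v} = G.induce {w | w ≠ v} := by
        ext ⟨a1, ha1⟩ ⟨b1, hb1⟩
        simp only [comap_adj, Function.Embedding.coe_subtype, deleteEdges_adj,
          Set.mem_singleton_iff, and_iff_left_iff_imp]
        intro _ hab
        rcases Sym2.eq_iff.mp hab with ⟨h1, h2⟩ | ⟨h1, h2⟩ <;>
          rcases hv with rfl | rfl <;> simp_all
      rw [hEq]
      exact hG.2 v
    · push_neg at hv
      obtain ⟨r, hr1, hr2⟩ := exists_walk_avoiding c hc hx' hy' hv.1 hv.2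
      refine del_conn hv.1 hv.2 (hG.2 v) r hr1 (fun hmem => hce ?_)
      exact heq ▸ (hr2 _ hmem)
  · intro hnochord
    refine ⟨he, fun hstrict => hnochord ?_⟩
    obtain ⟨h3', h2'⟩ := hstrict
    have h3 : 3 ≤ Fintype.card V := by
      rw [← Nat.card_eq_fintype_card]; omega
    obtain ⟨a, c', hc', hx', hy'⟩ := cycle_through_pair h3 h2' hxy
    have hsub : ∀ f ∈ c'.edges, f ∈ G.edgeSet := by
      intro f hf
      have := c'.edges_subset_edgeSet hf
      rw [edgeSet_deleteEdges] at this
      exact this.1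
    refine ⟨a, c'.transfer G hsub, x, y, hc'.transfer hsub, ?_, ?_, rfl, ?_⟩
    · rw [Walk.support_transfer]; exact hx'
    · rw [Walk.support_transfer]; exact hy'
    · rw [Walk.edges_transfer]
      intro hmem
      have := c'.edges_subset_edgeSet hmem
      rw [edgeSet_deleteEdges] at this
      exact this.2 rfl
end
end

section
/- Let G be a 2-connected graph, V' a subset of its vertex set, E' the set of edges of G with both endpoints in V', and E'' another set of edges on V' such that the graph (V', E'') is 2-connected. Then the graph on V(G) with edge set (E(G) \ E') ∪ E'' is 2-connected. -/
open SimpleGraph Sum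

noncomputable section

lemma aux_finite {V : Type*} [Finite V] (G : SimpleGraph V) : Finite G.ConnectedComponent :=
  Finite.of_surjective G.connectedComponentMk (ConnectedComponent.ind fun v => ⟨v, rfl⟩)

lemma numComponents_le_one {V : Type*} [Finite V] (G : SimpleGraph V)
    (h : G.Preconnected) : numComponents G ≤ 1 := by
  have : Finite G.ConnectedComponent := aux_finite G
  rw [numComponents, Finite.card_le_one_iff_subsingleton]
  constructor
  refine ConnectedComponent.ind₂ fun a b => ?_
  exact ConnectedComponent.sound (h a b)

lemma preconnected_of_le_one {V : Type*} [Finite V] (G : SimpleGraph V)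
    (h : numComponents G ≤ 1) : G.Preconnected := by
  have : Finite G.ConnectedComponent := aux_finite G
  rw [numComponents, Finite.card_le_one_iff_subsingleton] at h
  intro a b
  exact (ConnectedComponent.eq).mp (h.allEq _ _)

lemma numComponents_eq_one {V : Type*} [Finite V] (G : SimpleGraph V)
    (h : G.Connected) : numComponents G = 1 := by
  have h1 := numComponents_le_one G h.preconnected
  have hne : Nonempty V := h.nonempty
  have : Finite G.ConnectedComponent := aux_finite G
  have : Nonempty G.ConnectedComponent := ⟨G.connectedComponentMk hne.some⟩
  have h2 : 0 < numComponents G := Nat.card_pos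
  omega

/-- From no-cut-vertex + connected, get preconnectedness of the vertex-deleted graph. -/
lemma del_preconnected {V : Type*} [Finite V] (G : SimpleGraph V) {v : V} (hc : G.Connected)
    (h : ¬ IsCutVertex G v) : (G.induce {w | w ≠ v}).Preconnected := by
  apply preconnected_of_le_one
  rw [IsCutVertex, numComponents_eq_one G hc, not_lt] at h
  exact h

section Key
variable {V : Type*} [Fintype V] (G : SimpleGraph V) (V' : Set V) (G'' : SimpleGraph V)

abbrev Hgraph : SimpleGraph V := (G.deleteEdges {e ∈ G.edgeSet | ∀ x ∈ e, x ∈ V'}) ⊔ G''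

lemma key (p : Set V)
    (hyp : ∀ a b : V, a ∈ V' → b ∈ V' → ∀ (hpa : a ∈ p) (hpb : b ∈ p),
      ((Hgraph G V' G'').induce p).Reachable ⟨a, hpa⟩ ⟨b, hpb⟩)
    {x y : ↥p} (w : (G.induce p).Walk x y) :
    ((Hgraph G V' G'').induce p).Reachable x y := by
  induction w with
  | nil => exact Reachable.refl _
  | @cons a b c h q ih =>
    refine Reachable.trans ?_ ih
    by_cases hab : (a : V) ∈ V' ∧ (b : V) ∈ V'
    · have := hyp a b hab.1 hab.2 a.2 b.2
      simpa using this
    · apply Adj.reachable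
      show (Hgraph G V' G'').Adj (a : V) (b : V)
      left
      rw [SimpleGraph.deleteEdges_adj]
      refine ⟨h, fun hc => ?_⟩
      exact hab ⟨hc.2 _ (Sym2.mem_mk_left _ _), hc.2 _ (Sym2.mem_mk_right _ _)⟩

end Key

theorem stmt4 {V : Type*} [Fintype V] (G : SimpleGraph V) (hG : TwoConnConv G)
    (V' : Set V) (G'' : SimpleGraph V)
    (hG'' : ∀ a b : V, G''.Adj a b → a ∈ V' ∧ b ∈ V')
    (h2 : TwoConnConv (G''.induce V')) :
    TwoConnConv ((G.deleteEdges {e ∈ G.edgeSet | ∀ x ∈ e, x ∈ V'}) ⊔ G'') := by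
  have hne : Nonempty V := hG.1.nonempty
  have hconn : (Hgraph G V' G'').Connected := by
    rw [connected_iff]
    refine ⟨fun x y => ?_, hne⟩
    have hyp : ∀ a b : V, a ∈ V' → b ∈ V' → ∀ (hpa : a ∈ (Set.univ : Set V))
        (hpb : b ∈ (Set.univ : Set V)),
        ((Hgraph G V' G'').induce (Set.univ : Set V)).Reachable ⟨a, hpa⟩ ⟨b, hpb⟩ := by
      intro a b ha hb _ _
      exact (h2.1.preconnected ⟨a, ha⟩ ⟨b, hb⟩).map
        (⟨fun u => ⟨u, trivial⟩, fun {c d} h => Or.inr h⟩ :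
          (G''.induce V') →g ((Hgraph G V' G'').induce (Set.univ : Set V)))
    obtain ⟨w⟩ := (hG.1.preconnected x y).map
      (⟨fun u => ⟨u, trivial⟩, fun h => h⟩ : G →g G.induce (Set.univ : Set V))
    exact (key G V' G'' Set.univ hyp w).map
      (⟨Subtype.val, fun h => h⟩ :
        ((Hgraph G V' G'').induce (Set.univ : Set V)) →g (Hgraph G V' G''))
  refine ⟨hconn, fun v => ?_⟩
  rw [IsCutVertex, not_lt, numComponents_eq_one _ hconn]
  apply numComponents_le_one
  intro x y
  have hyp : ∀ a b : V, a ∈ V' → b ∈ V' → ∀ (hpa : a ∈ {w | w ≠ v}) (hpb : b ∈ {w | w ≠ v}),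
      ((Hgraph G V' G'').induce {w | w ≠ v}).Reachable ⟨a, hpa⟩ ⟨b, hpb⟩ := by
    intro a b haV' hbV' hpa hpb
    by_cases hv : v ∈ V'
    · have hpre := del_preconnected (G''.induce V') h2.1 (h2.2 ⟨v, hv⟩)
      exact (hpre ⟨⟨a, haV'⟩, fun hc => hpa (congrArg Subtype.val hc)⟩
        ⟨⟨b, hbV'⟩, fun hc => hpb (congrArg Subtype.val hc)⟩).map
        (⟨fun u => ⟨(u : V'), fun hc => u.2 (Subtype.ext hc)⟩, fun {c d} h => Or.inr h⟩ :
          ((G''.induce V').induce {u | u ≠ (⟨v, hv⟩ : V')}) →g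
            ((Hgraph G V' G'').induce {w | w ≠ v}))
    · exact (h2.1.preconnected ⟨a, haV'⟩ ⟨b, hbV'⟩).map
        (⟨fun u => ⟨u, fun hc => hv (hc ▸ u.2)⟩, fun {c d} h => Or.inr h⟩ :
          (G''.induce V') →g ((Hgraph G V' G'').induce {w | w ≠ v}))
  obtain ⟨w⟩ := del_preconnected G hG.1 (hG.2 v) x y
  exact key G V' G'' {w | w ≠ v} hyp w
end
end

section
/- If G1 is a spanning edge-subgraph of G2 (same vertex set, E(G1) ⊆ E(G2)), then every leaf block of G2 contains (as a subgraph) a leaf block or an entire isolated connected component of G1. -/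
open SimpleGraph Sum

noncomputable section

section Aux

variable {W W' : Type*}

lemma numComponents_eq_one_s5 [Finite W] {H : SimpleGraph W} (h : H.Connected) :
    numComponents H = 1 := by
  rw [numComponents, Nat.card_eq_one_iff_unique]
  constructor
  · constructor
    intro a b
    induction a using SimpleGraph.ConnectedComponent.ind with
    | _ a =>
    induction b using SimpleGraph.ConnectedComponent.ind with
    | _ b => exact SimpleGraph.ConnectedComponent.sound (h.preconnected a b)
  · exact ⟨SimpleGraph.connectedComponentMk H h.nonempty.some⟩

lemma connected_of_numComponents_le_one [Finite W] {H : SimpleGraph W}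
    (hne : Nonempty W) (h : numComponents H ≤ 1) : H.Connected := by
  have : Nonempty H.ConnectedComponent := ⟨SimpleGraph.connectedComponentMk H hne.some⟩
  have hpos : 0 < numComponents H := Nat.card_pos
  have h1 : numComponents H = 1 := le_antisymm h hpos
  rw [numComponents, Nat.card_eq_one_iff_unique] at h1
  obtain ⟨⟨hsub⟩, _⟩ := h1
  exact ⟨fun a b => SimpleGraph.ConnectedComponent.exact (hsub _ _)⟩

lemma numComponents_le_of_surjHom [Finite W] {H : SimpleGraph W} {H' : SimpleGraph W'}
    (f : H →g H') (hf : Function.Surjective f) : numComponents H' ≤ numComponents H := by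
  apply Nat.card_le_card_of_surjective (SimpleGraph.ConnectedComponent.map f)
  intro c
  induction c using SimpleGraph.ConnectedComponent.ind with
  | _ w =>
    obtain ⟨a, rfl⟩ := hf w
    exact ⟨SimpleGraph.connectedComponentMk H a, rfl⟩

end Aux
section Aux2

variable {V : Type*} {G : SimpleGraph V}

/-- transfer a walk avoiding `d` into the induced graph on `≠ d`. -/
lemma reachable_induce_of_walk {d : V} :
    ∀ {p q : V} (w : G.Walk p q) (h : ∀ t ∈ w.support, t ≠ d),
    (G.induce {w | w ≠ d}).Reachable
      ⟨p, h p w.start_mem_support⟩ ⟨q, h q w.end_mem_support⟩ := by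
  intro p q w
  induction w with
  | nil => intro h; rfl
  | @cons u v r hadj w ih =>
      intro h
      have hu : u ≠ d := h u (by simp)
      have hv : v ≠ d := h v (by simp)
      have h' : ∀ t ∈ w.support, t ≠ d := fun t ht => h t (by simp [ht])
      have hA : (G.induce {w | w ≠ d}).Adj ⟨u, hu⟩ ⟨v, hv⟩ := hadj
      exact (hA.reachable).trans (ih h')

lemma reachable_of_induce {s : Set V} {a b : ↥s}
    (h : (G.induce s).Reachable a b) : G.Reachable a.1 b.1 :=
  h.map (SimpleGraph.Embedding.induce s).toHom

/-- if `d` has no neighbors, walks starting away from `d` avoid `d`. -/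
lemma support_ne_of_isolated {d : V} (hiso : ∀ e, ¬ G.Adj d e) :
    ∀ {a b : V} (w : G.Walk a b), a ≠ d → ∀ t ∈ w.support, t ≠ d := by
  intro a b w
  induction w with
  | nil => intro ha t ht; simp at ht; subst ht; exact ha
  | @cons u v r hadj w ih =>
      intro ha t ht
      rw [SimpleGraph.Walk.support_cons] at ht
      rcases List.mem_cons.mp ht with rfl | ht
      · exact ha
      · have hv : v ≠ d := fun hvd => hiso u (hvd ▸ hadj.symm)
        exact ih hv t ht

lemma isCutVertex_of {d p q : V} [Fintype V] (hp : p ≠ d) (hq : q ≠ d)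
    (hr : G.Reachable p q)
    (hn : ¬ (G.induce {w | w ≠ d}).Reachable ⟨p, hp⟩ ⟨q, hq⟩) : IsCutVertex G d := by
  classical
  have hnbr : ∃ e, G.Adj d e := by
    by_contra hiso
    push_neg at hiso
    obtain ⟨w⟩ := hr
    exact hn (reachable_induce_of_walk w (support_ne_of_isolated hiso w hp))
  obtain ⟨e, he⟩ := hnbr
  let φ : (G.induce {w : V | w ≠ d}).ConnectedComponent → G.ConnectedComponent :=
    SimpleGraph.ConnectedComponent.map (SimpleGraph.Embedding.induce {w : V | w ≠ d}).toHom
  have hφ : ∀ w, φ ((G.induce {w : V | w ≠ d}).connectedComponentMk w)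
      = G.connectedComponentMk w.1 := fun w => rfl
  have hsurj : Function.Surjective φ := by
    intro c
    induction c using SimpleGraph.ConnectedComponent.ind with
    | _ w =>
      by_cases hw : w = d
      · have hne : e ≠ d := fun h' => G.loopless.irrefl d (h' ▸ he)
        refine ⟨(G.induce {w : V | w ≠ d}).connectedComponentMk ⟨e, hne⟩, ?_⟩
        rw [hφ, hw]
        exact SimpleGraph.ConnectedComponent.sound he.symm.reachable
      · exact ⟨(G.induce {w : V | w ≠ d}).connectedComponentMk ⟨w, hw⟩, hφ _⟩
  have hninj : ¬ Function.Injective φ := by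
    intro hinj
    apply hn
    have h1 : φ ((G.induce {w : V | w ≠ d}).connectedComponentMk ⟨p, hp⟩)
        = φ ((G.induce {w : V | w ≠ d}).connectedComponentMk ⟨q, hq⟩) := by
      rw [hφ, hφ]
      exact SimpleGraph.ConnectedComponent.sound hr
    exact SimpleGraph.ConnectedComponent.exact (hinj h1)
  letI : Fintype (G.induce {w : V | w ≠ d}).ConnectedComponent := Fintype.ofFinite _
  letI : Fintype G.ConnectedComponent := Fintype.ofFinite _
  have := Fintype.card_lt_of_surjective_not_injective φ hsurj hninj
  rw [IsCutVertex, numComponents, numComponents, Nat.card_eq_fintype_card,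
    Nat.card_eq_fintype_card]
  exact this

/-- from a cut vertex, produce two vertices joined to `d` but separated without `d`. -/
lemma cut_vertex_parts {d : V} [Fintype V] (h : IsCutVertex G d) :
    ∃ (p q : V) (hp : p ≠ d) (hq : q ≠ d), G.Reachable p d ∧ G.Reachable q d ∧
      ¬ (G.induce {w | w ≠ d}).Reachable ⟨p, hp⟩ ⟨q, hq⟩ := by
  classical
  by_contra hcon
  push_neg at hcon
  have key : ∀ (p q : V) (hp : p ≠ d) (hq : q ≠ d), G.Reachable p q →
      (G.induce {w | w ≠ d}).Reachable ⟨p, hp⟩ ⟨q, hq⟩ := by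
    intro p q hp hq hr
    obtain ⟨w⟩ := hr
    by_cases hd : d ∈ w.support
    · have h1 : G.Reachable p d := ⟨w.takeUntil d hd⟩
      have h2 : G.Reachable q d := ⟨(w.reverse.takeUntil d (by simpa using hd))⟩
      exact hcon p q hp hq h1 h2
    · exact reachable_induce_of_walk w (fun t ht hteq => hd (by rw [← hteq]; exact ht))
  let ψ : (G.induce {w : V | w ≠ d}).ConnectedComponent → G.ConnectedComponent :=
    SimpleGraph.ConnectedComponent.map (SimpleGraph.Embedding.induce {w : V | w ≠ d}).toHom
  have hψ : ∀ w, ψ ((G.induce {w : V | w ≠ d}).connectedComponentMk w)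
      = G.connectedComponentMk w.1 := fun w => rfl
  have hinj : Function.Injective ψ := by
    intro c1 c2
    induction c1 using SimpleGraph.ConnectedComponent.ind with
    | _ w1 =>
    induction c2 using SimpleGraph.ConnectedComponent.ind with
    | _ w2 =>
      intro hEq
      rw [hψ, hψ] at hEq
      have hr : G.Reachable w1.1 w2.1 := SimpleGraph.ConnectedComponent.exact hEq
      have := key w1.1 w2.1 w1.2 w2.2 hr
      exact SimpleGraph.ConnectedComponent.sound (by simpa using this)
  have hle : Nat.card (G.induce {w : V | w ≠ d}).ConnectedComponent
      ≤ Nat.card G.ConnectedComponent :=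
    Nat.card_le_card_of_injective ψ hinj
  rw [IsCutVertex] at h
  simp only [numComponents] at h
  omega

end Aux2
section Aux3

open SimpleGraph

variable {V : Type*} {G : SimpleGraph V}

instance subgraphFinite [Finite V] : Finite G.Subgraph :=
  Finite.of_injective (fun H => (H.verts, H.Adj))
    (fun H K h => by
      obtain ⟨h1, h2⟩ := Prod.mk.injEq _ _ _ _ ▸ h
      exact SimpleGraph.Subgraph.ext h1 h2)

/-- The coercion of a subgraph is connected iff ... we use `Subgraph.Connected`. -/
lemma twoConnConv_singleton (u : V) : TwoConnConv (G.singletonSubgraph u).coe := by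
  constructor
  · exact SimpleGraph.Subgraph.singletonSubgraph_connected.coe
  · intro v hv
    rw [IsCutVertex] at hv
    have h0 : IsEmpty {w : ↥(G.singletonSubgraph u).verts | w ≠ v} := by
      constructor
      rintro ⟨⟨w, hw⟩, hne⟩
      have hv' := v.2
      simp only [SimpleGraph.singletonSubgraph_verts, Set.mem_singleton_iff] at hw hv'
      exact hne (by ext; exact hw.trans hv'.symm)
    have hz : numComponents ((G.singletonSubgraph u).coe.induce {w | w ≠ v}) = 0 := by
      rw [numComponents, Nat.card_eq_zero]
      left
      constructor
      intro c
      induction c using SimpleGraph.ConnectedComponent.ind with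
      | _ w => exact h0.elim w
    omega

/-- Every vertex lies in a block. -/
lemma exists_block [Finite V] (u : V) : ∃ B : G.Subgraph, IsBlock G B ∧ u ∈ B.verts := by
  classical
  set s : Set G.Subgraph := {H | G.singletonSubgraph u ≤ H ∧ TwoConnConv H.coe} with hs
  have hne : s.Nonempty := ⟨G.singletonSubgraph u, le_refl _, twoConnConv_singleton u⟩
  obtain ⟨B, hBs, hBmax⟩ := Set.Finite.exists_maximalFor id s (Set.toFinite s) hne
  refine ⟨B, ⟨hBs.2, ?_⟩, ?_⟩
  · intro H' hle htc
    exact le_antisymm (hBmax ⟨le_trans hBs.1 hle, htc⟩ hle) hle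
  · have := hBs.1.1
    simp only [SimpleGraph.singletonSubgraph_verts, Set.singleton_subset_iff] at this
    exact this

end Aux3
section Aux4

open SimpleGraph

variable {V : Type*} {G : SimpleGraph V}

/-- iso between deleting a vertex from a subgraph and inducing away from it. -/
def deleteIso (H : G.Subgraph) (z0 : ↥H.verts) :
    (H.deleteVerts {z0.1}).coe ≃g H.coe.induce {w : ↥H.verts | w ≠ z0} where
  toFun a := ⟨⟨a.1, a.2.1⟩, fun hEq => a.2.2 (congrArg Subtype.val hEq)⟩
  invFun b := ⟨b.1.1, ⟨b.1.2, fun h => b.2 (Subtype.ext h)⟩⟩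
  left_inv a := rfl
  right_inv b := rfl
  map_rel_iff' := by
    intro a b
    simp only [SimpleGraph.Subgraph.deleteVerts_adj, SimpleGraph.comap_adj,
      Equiv.coe_fn_mk, SimpleGraph.Subgraph.coe_adj]
    constructor
    · rintro h
      exact ⟨a.2.1, a.2.2, b.2.1, b.2.2, h⟩
    · rintro ⟨_, _, _, _, h⟩
      exact h

lemma numComponents_induce_ne_eq_one [Finite V] {H : G.Subgraph} {z0 : ↥H.verts}
    (h : (H.deleteVerts {z0.1}).Connected) :
    numComponents (H.coe.induce {w : ↥H.verts | w ≠ z0}) = 1 :=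
  numComponents_eq_one_s5 (((deleteIso H z0).connected_iff).mp h.coe)

lemma del_connected_of_twoConn [Finite V] {H : G.Subgraph} (ht : TwoConnConv H.coe)
    (z0 : ↥H.verts) {b : V} (hb : b ∈ H.verts) (hbz : b ≠ z0.1) :
    (H.deleteVerts {z0.1}).Connected := by
  have hne : Nonempty {w : ↥H.verts | w ≠ z0} :=
    ⟨⟨⟨b, hb⟩, fun hEq => hbz (congrArg Subtype.val hEq)⟩⟩
  have h1 : numComponents H.coe = 1 := numComponents_eq_one_s5 ht.1
  have h2 := ht.2 z0
  rw [IsCutVertex, h1] at h2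
  have h3 : numComponents (H.coe.induce {w : ↥H.verts | w ≠ z0}) ≤ 1 := by omega
  have h4 := connected_of_numComponents_le_one hne h3
  exact ⟨((deleteIso H z0).connected_iff).mpr h4⟩

lemma deleteVerts_eq_of_not_mem {H : G.Subgraph} {c : V} (hc : c ∉ H.verts) :
    H.deleteVerts {c} = H := by
  ext x y
  · simp only [SimpleGraph.Subgraph.deleteVerts_verts, Set.mem_diff, Set.mem_singleton_iff]
    exact ⟨fun h => h.1, fun h => ⟨h, fun hEq => hc (hEq ▸ h)⟩⟩
  · simp only [SimpleGraph.Subgraph.deleteVerts_adj, Set.mem_singleton_iff]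
    constructor
    · rintro ⟨_, _, _, _, h⟩; exact h
    · intro h
      exact ⟨H.edge_vert h, fun hEq => hc (hEq ▸ H.edge_vert h),
        H.edge_vert h.symm, fun hEq => hc (hEq ▸ H.edge_vert h.symm), h⟩

lemma deleteVerts_sup {A B : G.Subgraph} {s : Set V} :
    (A ⊔ B).deleteVerts s = A.deleteVerts s ⊔ B.deleteVerts s := by
  ext x y
  · simp only [SimpleGraph.Subgraph.deleteVerts_verts, SimpleGraph.Subgraph.verts_sup,
      Set.mem_diff, Set.mem_union]
    tauto
  · simp only [SimpleGraph.Subgraph.deleteVerts_adj, SimpleGraph.Subgraph.sup_adj,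
      SimpleGraph.Subgraph.verts_sup, Set.mem_union]
    constructor
    · rintro ⟨hx, hxs, hy, hys, h | h⟩
      · exact Or.inl ⟨A.edge_vert h, hxs, A.edge_vert h.symm, hys, h⟩
      · exact Or.inr ⟨B.edge_vert h, hxs, B.edge_vert h.symm, hys, h⟩
    · rintro (⟨hx, hxs, hy, hys, h⟩ | ⟨hx, hxs, hy, hys, h⟩)
      · exact ⟨Or.inl hx, hxs, Or.inl hy, hys, Or.inl h⟩
      · exact ⟨Or.inr hx, hxs, Or.inr hy, hys, Or.inr h⟩

/-- A bigger subgraph on the same vertex set as a 2-connected one is 2-connected if connected. -/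
lemma twoConnConv_of_le [Finite V] {H K : G.Subgraph} (hle : H ≤ K) (hv : K.verts = H.verts)
    (ht : TwoConnConv H.coe) (hc : K.coe.Connected) : TwoConnConv K.coe := by
  obtain ⟨hle1, hle2⟩ := hle
  obtain ⟨Hv, HAdj, hH1, hH2, hH3⟩ := H
  obtain ⟨Kv, KAdj, hK1, hK2, hK3⟩ := K
  simp only at hv hle1 hle2 ht hc ⊢
  subst hv
  refine ⟨hc, ?_⟩
  intro w hcut
  rw [IsCutVertex, numComponents_eq_one_s5 hc] at hcut
  have hsurj : numComponents
      ((SimpleGraph.Subgraph.mk Kv KAdj hK1 hK2 hK3 : G.Subgraph).coe.induce {w' | w' ≠ w})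
      ≤ numComponents
      ((SimpleGraph.Subgraph.mk Kv HAdj hH1 hH2 hH3 : G.Subgraph).coe.induce {w' | w' ≠ w}) := by
    refine numComponents_le_of_surjHom ⟨fun x => x, ?_⟩ Function.surjective_id
    intro a b hab
    exact hle2 hab
  have h2 := ht.2 w
  rw [IsCutVertex, numComponents_eq_one_s5 ht.1] at h2
  omega

end Aux4
section Aux5

open SimpleGraph

variable {V : Type*} {G : SimpleGraph V}

lemma numComponents_le_one_of_subsingleton {W : Type*} [Subsingleton W] {H : SimpleGraph W} :
    numComponents H ≤ 1 := by
  have hss : Subsingleton H.ConnectedComponent := by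
    constructor
    intro a b
    induction a using SimpleGraph.ConnectedComponent.ind with
    | _ a =>
    induction b using SimpleGraph.ConnectedComponent.ind with
    | _ b => rw [Subsingleton.elim a b]
  rcases isEmpty_or_nonempty H.ConnectedComponent with hE | hne
  · simp [numComponents, Nat.card_of_isEmpty]
  · rw [numComponents, Nat.card_of_subsingleton hne.some]

lemma twoConnConv_subgraphOfAdj [Finite V] {x y : V} (hxy : G.Adj x y) :
    TwoConnConv (G.subgraphOfAdj hxy).coe := by
  have hconn : (G.subgraphOfAdj hxy).coe.Connected :=
    (SimpleGraph.Subgraph.subgraphOfAdj_connected hxy).coe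
  refine ⟨hconn, ?_⟩
  intro w hcut
  rw [IsCutVertex, numComponents_eq_one_s5 hconn] at hcut
  have hss : Subsingleton {t : ↥(G.subgraphOfAdj hxy).verts | t ≠ w} := by
    constructor
    rintro ⟨⟨a, ha⟩, ha'⟩ ⟨⟨b, hb⟩, hb'⟩
    have hw := w.2
    simp only [SimpleGraph.subgraphOfAdj_verts, Set.mem_insert_iff,
      Set.mem_singleton_iff] at ha hb hw
    have ha'' : a ≠ w.1 := fun hEq => ha' (Subtype.ext hEq)
    have hb'' : b ≠ w.1 := fun hEq => hb' (Subtype.ext hEq)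
    have : a = b := by
      rcases hw with hw | hw <;> rcases ha with ha | ha <;> rcases hb with hb | hb <;>
        simp_all
    exact Subtype.ext (Subtype.ext this)
  have := numComponents_le_one_of_subsingleton
    (H := (G.subgraphOfAdj hxy).coe.induce {t | t ≠ w})
  omega

/-- truncate a walk at its first entry into a set `Sv`. -/
lemma exists_first_entry {α : Type*} {H : SimpleGraph α} (Sv : Set α) :
    ∀ {p q : α} (w : H.Walk p q), p ∉ Sv → q ∈ Sv →
    ∃ (z : α) (_ : z ∈ Sv) (w' : H.Walk p z), ∀ t ∈ w'.support, t ∉ Sv ∨ t = z := by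
  intro p q w
  induction w with
  | nil => intro hp hq; exact absurd hq hp
  | @cons u v r hadj w ih =>
    intro hp hq
    by_cases hv : v ∈ Sv
    · refine ⟨v, hv, SimpleGraph.Walk.cons hadj SimpleGraph.Walk.nil, ?_⟩
      intro t ht
      simp only [SimpleGraph.Walk.support_cons, SimpleGraph.Walk.support_nil,
        List.mem_cons, List.mem_singleton] at ht
      rcases ht with rfl | (rfl | h)
      · exact Or.inl hp
      · exact Or.inr rfl
      · exact absurd h (by simp)
    · obtain ⟨z, hz, w', hw'⟩ := ih hv hq
      refine ⟨z, hz, SimpleGraph.Walk.cons hadj w', ?_⟩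
      intro t ht
      rw [SimpleGraph.Walk.support_cons] at ht
      rcases List.mem_cons.mp ht with rfl | ht
      · exact Or.inl hp
      · exact hw' t ht

lemma subgraphOfAdj_deleteVerts_fst {x y : V} (hxy : G.Adj x y) :
    (G.subgraphOfAdj hxy).deleteVerts {x} = G.singletonSubgraph y := by
  ext a b
  · simp only [SimpleGraph.Subgraph.deleteVerts_verts, SimpleGraph.subgraphOfAdj_verts,
      SimpleGraph.singletonSubgraph_verts, Set.mem_diff, Set.mem_insert_iff,
      Set.mem_singleton_iff]
    constructor
    · rintro ⟨rfl | rfl, h2⟩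
      · exact absurd rfl h2
      · rfl
    · rintro rfl
      exact ⟨Or.inr rfl, fun hEq => hxy.ne hEq.symm⟩
  · simp only [SimpleGraph.Subgraph.deleteVerts_adj, SimpleGraph.subgraphOfAdj_verts,
      SimpleGraph.subgraphOfAdj_adj, Set.mem_singleton_iff]
    constructor
    · rintro ⟨ha, ha', hb, hb', h⟩
      rw [Sym2.eq_iff] at h
      rcases h with ⟨rfl, rfl⟩ | ⟨rfl, rfl⟩
      · exact absurd rfl ha'
      · exact absurd rfl hb'
    · intro h
      exact absurd h (by simp [SimpleGraph.singletonSubgraph])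

/-- deleting the first vertex of a path from its subgraph. -/
lemma toSubgraph_deleteVerts_start {a b : V} (w : G.Walk a b)
    (hnodup : w.support.Nodup) (hne : a ≠ b) :
    ∃ (r : V) (q : G.Walk r b), w.toSubgraph.deleteVerts {a} = q.toSubgraph
      ∧ a ∉ q.support := by
  cases w with
  | nil => exact absurd rfl hne
  | @cons _ v _ hadj q =>
    have hnotmem : a ∉ q.support := by
      rw [SimpleGraph.Walk.support_cons] at hnodup
      exact (List.nodup_cons.mp hnodup).1
    refine ⟨v, q, ?_, hnotmem⟩
    have hcons : (SimpleGraph.Walk.cons hadj q).toSubgraph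
        = G.subgraphOfAdj hadj ⊔ q.toSubgraph := rfl
    have hq : q.toSubgraph.deleteVerts {a} = q.toSubgraph :=
      deleteVerts_eq_of_not_mem
        (by rw [SimpleGraph.Walk.verts_toSubgraph]; exact hnotmem)
    rw [hcons]
    rw [deleteVerts_sup]
    rw [subgraphOfAdj_deleteVerts_fst]
    rw [hq]
    exact sup_eq_right.mpr ((SimpleGraph.singletonSubgraph_le_iff _ _).mpr
      q.start_mem_verts_toSubgraph)

/-- deleting the last vertex of a path from its subgraph. -/
lemma toSubgraph_deleteVerts_end {a b : V} (w : G.Walk a b)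
    (hnodup : w.support.Nodup) (hne : a ≠ b) :
    ∃ (r : V) (q : G.Walk r a), w.toSubgraph.deleteVerts {b} = q.toSubgraph
      ∧ b ∉ q.support := by
  obtain ⟨r, q, hq, hmem⟩ := toSubgraph_deleteVerts_start w.reverse
    (by rwa [SimpleGraph.Walk.support_reverse, List.nodup_reverse]) (Ne.symm hne)
  exact ⟨r, q, by rwa [SimpleGraph.Walk.toSubgraph_reverse] at hq, hmem⟩

end Aux5
section Aux6

lemma SimpleGraph.Subgraph.Connected.sup {V : Type*} {G : SimpleGraph V} {H K : G.Subgraph}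
    (hH : H.Connected) (hK : K.Connected) (hn : (H ⊓ K).verts.Nonempty) :
    (H ⊔ K).Connected :=
  SimpleGraph.Subgraph.connected_sup hH.preconnected hK.preconnected hn

open SimpleGraph

variable {V : Type*} {G : SimpleGraph V}

lemma block_isCutVertex_of_edge_leaving [Fintype V] {B : G.Subgraph} (hB : IsBlock G B)
    {x y : V} (hx : x ∈ B.verts) (hxy : G.Adj x y) (hy : y ∉ B.verts) : IsCutVertex G x := by
  classical
  have hyx : y ≠ x := fun h => hy (h ▸ hx)
  have hbig : ∃ b, b ∈ B.verts ∧ b ≠ x := by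
    by_contra hcon
    push_neg at hcon
    have hle : B ≤ G.subgraphOfAdj hxy := by
      constructor
      · intro t ht
        rw [hcon t ht]
        exact Set.mem_insert _ _
      · intro p q hpq
        have hp := hcon p (B.edge_vert hpq)
        have hq := hcon q (B.edge_vert hpq.symm)
        exact absurd (B.adj_sub hpq) (by rw [hp, hq]; exact G.loopless.irrefl x)
    have heq := hB.2 _ hle (twoConnConv_subgraphOfAdj hxy)
    exact absurd (heq ▸ (Set.mem_insert_of_mem x rfl : y ∈ (G.subgraphOfAdj hxy).verts)) hy
  obtain ⟨b0, hb0, hb0x⟩ := hbig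
  by_cases hreach : ∃ (b : V) (hb : b ∈ B.verts) (hbx : b ≠ x),
      (G.induce {w | w ≠ x}).Reachable ⟨y, hyx⟩ ⟨b, hbx⟩
  case neg =>
    refine isCutVertex_of hyx hb0x ?_ ?_
    · exact hxy.symm.reachable.trans ((hB.1.1.preconnected ⟨x, hx⟩ ⟨b0, hb0⟩).map B.hom)
    · intro hr'
      exact hreach ⟨b0, hb0, hb0x, hr'⟩
  case pos =>
    exfalso
    obtain ⟨b, hbB, hbx, hre⟩ := hreach
    obtain ⟨w0⟩ := hre
    obtain ⟨z, hzS, w1, hprop⟩ := exists_first_entry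
      {t : ↥{w : V | w ≠ x} | t.1 ∈ B.verts} w0 hy hbB
    have hzB : z.1 ∈ B.verts := hzS
    have hzx : z.1 ≠ x := z.2
    -- take the path and map to G
    let pg : G.Walk y z.1 :=
      (SimpleGraph.Walk.map (SimpleGraph.Embedding.induce {w : V | w ≠ x}).toHom
        w1.toPath.val).copy rfl rfl
    have hpgsup : pg.support = w1.toPath.val.support.map Subtype.val := by
      exact (SimpleGraph.Walk.support_copy ..).trans (SimpleGraph.Walk.support_map ..)
    have hnodup : pg.support.Nodup := by
      rw [hpgsup]
      refine List.Nodup.map ?_ w1.toPath.prop.support_nodup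
      intro s t hst
      exact Subtype.ext hst
    have hsupx : ∀ t ∈ pg.support, t ≠ x := by
      intro t ht
      rw [hpgsup] at ht
      obtain ⟨s, hs, rfl⟩ := List.mem_map.mp ht
      exact s.2
    have hsupB : ∀ t ∈ pg.support, t ∉ B.verts ∨ t = z.1 := by
      intro t ht
      rw [hpgsup] at ht
      obtain ⟨s, hs, rfl⟩ := List.mem_map.mp ht
      have hs' := SimpleGraph.Walk.support_toPath_subset w1 hs
      rcases hprop s hs' with h | h
      · exact Or.inl h
      · exact Or.inr (congrArg Subtype.val h)
    have hyz : y ≠ z.1 := fun h => hy (h ▸ hzB)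
    have hPy : y ∈ pg.toSubgraph.verts := pg.start_mem_verts_toSubgraph
    have hPz : z.1 ∈ pg.toSubgraph.verts := pg.end_mem_verts_toSubgraph
    have hxP : x ∉ pg.toSubgraph.verts := by
      rw [SimpleGraph.Walk.verts_toSubgraph]
      exact fun hmem => hsupx x hmem rfl
    have hBconn : B.Connected := ⟨hB.1.1⟩
    have hEconn : (G.subgraphOfAdj hxy).Connected := Subgraph.subgraphOfAdj_connected hxy
    have hPconn : pg.toSubgraph.Connected := pg.toSubgraph_connected
    have hconn : (B ⊔ G.subgraphOfAdj hxy ⊔ pg.toSubgraph).Connected := by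
      refine (hBconn.sup hEconn ⟨x, hx, Set.mem_insert _ _⟩).sup hPconn
        ⟨y, Or.inr (Set.mem_insert_of_mem x rfl), hPy⟩
    -- connectivity after deleting any vertex
    have hdel : ∀ c, c ∈ (B ⊔ G.subgraphOfAdj hxy ⊔ pg.toSubgraph).verts →
        ((B ⊔ G.subgraphOfAdj hxy ⊔ pg.toSubgraph).deleteVerts {c}).Connected := by
      intro c hc
      rw [deleteVerts_sup, deleteVerts_sup]
      by_cases hcx : c = x
      · subst hcx
        rw [subgraphOfAdj_deleteVerts_fst hxy, deleteVerts_eq_of_not_mem hxP,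
          sup_right_comm]
        have hB' : (B.deleteVerts {c}).Connected :=
          del_connected_of_twoConn hB.1 ⟨c, hx⟩ hzB hzx
        refine (hB'.sup hPconn ⟨z.1, ⟨hzB, hzx⟩, hPz⟩).sup
          Subgraph.singletonSubgraph_connected ⟨y, Or.inr hPy, rfl⟩
      · by_cases hcy : c = y
        · subst hcy
          obtain ⟨r, q, hq, _⟩ := toSubgraph_deleteVerts_start pg hnodup hyz
          rw [deleteVerts_eq_of_not_mem hy, ← SimpleGraph.subgraphOfAdj_symm hxy,
            subgraphOfAdj_deleteVerts_fst hxy.symm, hq]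
          refine (hBconn.sup Subgraph.singletonSubgraph_connected ⟨x, hx, rfl⟩).sup
            q.toSubgraph_connected ⟨z.1, Or.inl hzB, q.end_mem_verts_toSubgraph⟩
        · by_cases hcB : c ∈ B.verts
          · have hcE : c ∉ (G.subgraphOfAdj hxy).verts := by
              rintro (h | h)
              · exact hcx h
              · exact hcy h
            by_cases hcz : c = z.1
            · rw [hcz]
              obtain ⟨r, q, hq, _⟩ := toSubgraph_deleteVerts_end pg hnodup hyz
              have hcE' : (z.1 : V) ∉ (G.subgraphOfAdj hxy).verts := hcz ▸ hcE
              rw [deleteVerts_eq_of_not_mem hcE', hq]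
              have hB' : (B.deleteVerts {(z.1 : V)}).Connected :=
                del_connected_of_twoConn hB.1 ⟨z.1, hzB⟩ hx (fun h => hzx h.symm)
              refine (hB'.sup hEconn ⟨x, ⟨hx, fun h => hzx h.symm⟩, Set.mem_insert _ _⟩).sup
                q.toSubgraph_connected
                ⟨y, Or.inr (Set.mem_insert_of_mem x rfl), q.end_mem_verts_toSubgraph⟩
            · have hcP : c ∉ pg.toSubgraph.verts := by
                rw [SimpleGraph.Walk.verts_toSubgraph]
                intro hmem
                rcases hsupB c hmem with h | h
                · exact h hcB
                · exact hcz h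
              rw [deleteVerts_eq_of_not_mem hcE, deleteVerts_eq_of_not_mem hcP]
              have hB' : (B.deleteVerts {c}).Connected :=
                del_connected_of_twoConn hB.1 ⟨c, hcB⟩ hx (fun h => hcx h.symm)
              refine (hB'.sup hEconn ⟨x, ⟨hx, fun h => hcx h.symm⟩, Set.mem_insert _ _⟩).sup
                hPconn ⟨y, Or.inr (Set.mem_insert_of_mem x rfl), hPy⟩
          · -- c is internal to the path
            have hcE : c ∉ (G.subgraphOfAdj hxy).verts := by
              rintro (h | h)
              · exact hcx h
              · exact hcy h
            have hcP : c ∈ pg.support := by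
              rcases hc with (h | h) | h
              · exact absurd h hcB
              · exact absurd h hcE
              · rwa [SimpleGraph.Walk.verts_toSubgraph] at h
            have hcz : c ≠ z.1 := fun h => hcB (h ▸ hzB)
            have hcy' : y ≠ c := fun h => hcy h.symm
            have hpath : pg.IsPath := (SimpleGraph.Walk.isPath_def pg).mpr hnodup
            have ht1 : (pg.takeUntil c hcP).support.Nodup :=
              (SimpleGraph.Walk.isPath_def _).mp (hpath.takeUntil hcP)
            have ht2 : (pg.dropUntil c hcP).support.Nodup :=
              (SimpleGraph.Walk.isPath_def _).mp (hpath.dropUntil hcP)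
            obtain ⟨r1, q1, hq1, _⟩ := toSubgraph_deleteVerts_end
              (pg.takeUntil c hcP) ht1 hcy'
            obtain ⟨r2, q2, hq2, _⟩ := toSubgraph_deleteVerts_start
              (pg.dropUntil c hcP) ht2 hcz
            have hsplit : pg.toSubgraph
                = (pg.takeUntil c hcP).toSubgraph ⊔ (pg.dropUntil c hcP).toSubgraph := by
              rw [← SimpleGraph.Walk.toSubgraph_append, SimpleGraph.Walk.take_spec]
            rw [deleteVerts_eq_of_not_mem hcB, deleteVerts_eq_of_not_mem hcE, hsplit,
              deleteVerts_sup, hq1, hq2, ← sup_assoc]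
            refine (((hBconn.sup hEconn ⟨x, hx, Set.mem_insert _ _⟩).sup
              q1.toSubgraph_connected
              ⟨y, Or.inr (Set.mem_insert_of_mem x rfl), q1.end_mem_verts_toSubgraph⟩).sup
              q2.toSubgraph_connected
              ⟨z.1, Or.inl (Or.inl hzB), q2.end_mem_verts_toSubgraph⟩)
    have htwo : TwoConnConv ((B ⊔ G.subgraphOfAdj hxy ⊔ pg.toSubgraph)).coe := by
      refine ⟨hconn.coe, ?_⟩
      intro z0 hcut
      rw [IsCutVertex, numComponents_eq_one_s5 hconn.coe,
        numComponents_induce_ne_eq_one (hdel z0.1 z0.2)] at hcut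
      exact lt_irrefl 1 hcut
    have heq := hB.2 _ ((le_sup_left : B ≤ B ⊔ G.subgraphOfAdj hxy).trans le_sup_left) htwo
    have hyH : y ∈ (B ⊔ G.subgraphOfAdj hxy ⊔ pg.toSubgraph).verts :=
      Or.inl (Or.inr (Set.mem_insert_of_mem x rfl))
    rw [heq] at hyH
    exact hy hyH

end Aux6
section Aux7

open SimpleGraph

variable {V : Type*} {G : SimpleGraph V}

lemma walk_propagate {W : Type*} {H : SimpleGraph W} (P : W → Prop)
    (hstep : ∀ a b, H.Adj a b → P a → P b) :
    ∀ {a b : W}, H.Reachable a b → P a → P b := by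
  intro a b hr
  obtain ⟨w⟩ := hr
  induction w with
  | nil => exact id
  | cons h p ih => exact fun ha => ih (hstep _ _ h ha)

lemma prop_part {R : Set V} {c d : V}
    (hdangle : ∀ p q, G.Adj p q → p ∈ R → q ∈ R ∨ q = c) (hcd : c ≠ d)
    (y0 y : ↥{w : V | w ≠ d}) (hre : (G.induce {w | w ≠ d}).Reachable y0 y)
    (hy0 : y0.1 ∈ R) (hnc : ¬ (G.induce {w | w ≠ d}).Reachable y0 ⟨c, hcd⟩) :
    y.1 ∈ R := by
  refine walk_propagate (H := G.induce {w | w ≠ d})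
    (fun t => (G.induce {w | w ≠ d}).Reachable y0 t → t.1 ∈ R) ?_ hre (fun _ => hy0) hre
  intro s t hst hPs hrt
  have hrs : (G.induce {w | w ≠ d}).Reachable y0 s := hrt.trans hst.symm.reachable
  have hsR : s.1 ∈ R := hPs hrs
  rcases hdangle s.1 t.1 hst hsR with h | h
  · exact h
  · refine absurd ?_ hnc
    have hteq : t = (⟨c, hcd⟩ : ↥{w : V | w ≠ d}) := Subtype.ext h
    rw [← hteq]
    exact hrt

/-- find a neighbor of `d` in the same `G - d` part as `x`. -/
lemma exists_nbr_part_aux {d : V} :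
    ∀ {x b : V} (w : G.Walk x b) (hb : b = d) (hx : x ≠ d),
    ∃ (y0 : V) (hy0 : y0 ≠ d), G.Adj d y0 ∧
      (G.induce {w | w ≠ d}).Reachable ⟨x, hx⟩ ⟨y0, hy0⟩ := by
  intro x b w
  induction w with
  | nil => exact fun hb hx => absurd hb hx
  | @cons u v r hadj p ih =>
    intro hb hx
    by_cases hv : v = d
    · refine ⟨u, hx, ?_, SimpleGraph.Reachable.refl _⟩
      rw [← hv]
      exact hadj.symm
    · obtain ⟨y0, hy0, hadj0, hre⟩ := ih hb hv
      have hA : (G.induce {w | w ≠ d}).Adj ⟨u, hx⟩ ⟨v, hv⟩ := hadj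
      exact ⟨y0, hy0, hadj0, hA.reachable.trans hre⟩

lemma exists_nbr_part {d x : V} (w : G.Walk x d) (hx : x ≠ d) :
    ∃ (y0 : V) (hy0 : y0 ≠ d), G.Adj d y0 ∧
      (G.induce {w | w ≠ d}).Reachable ⟨x, hx⟩ ⟨y0, hy0⟩ :=
  exists_nbr_part_aux w rfl hx

/-- any block touching the dangling region `R` is contained in `R ∪ {c}`. -/
lemma block_verts_subset [Fintype V] {R : Set V} {c : V} {B : G.Subgraph}
    (hB : IsBlock G B)
    (hdangle : ∀ p q, G.Adj p q → p ∈ R → q ∈ R ∨ q = c) (hc : c ∉ R)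
    {u : V} (hu : u ∈ B.verts) (huR : u ∈ R) :
    B.verts ⊆ R ∪ {c} := by
  intro t ht
  by_cases htc : t = c
  · exact Or.inr htc
  by_cases hcB : c ∈ B.verts
  · have huc : u ≠ c := fun h => hc (h ▸ huR)
    have hconn := del_connected_of_twoConn hB.1 ⟨c, hcB⟩ hu huc
    have hre := hconn ⟨u, ⟨hu, huc⟩⟩ ⟨t, ⟨ht, htc⟩⟩
    refine Or.inl (walk_propagate (fun s => s.1 ∈ R) ?_ hre huR)
    intro s t' hst hsR
    have hadj : G.Adj s.1 t'.1 := B.adj_sub hst.2.2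
    rcases hdangle _ _ hadj hsR with h | h
    · exact h
    · exact absurd h t'.2.2
  · have hre := hB.1.1.preconnected ⟨u, hu⟩ ⟨t, ht⟩
    refine Or.inl (walk_propagate (fun s => s.1 ∈ R) ?_ hre huR)
    intro s t' hst hsR
    have hadj : G.Adj s.1 t'.1 := B.adj_sub hst
    rcases hdangle _ _ hadj hsR with h | h
    · exact h
    · exact absurd (h ▸ t'.2) hcB

/-- main recursion: a dangling region contains a leaf block or a full component. -/
lemma rec_main [Fintype V] :
    ∀ (n : ℕ) (R : Set V) (c u : V), R.ncard ≤ n → u ∈ R → c ∉ R →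
      (∀ p q, G.Adj p q → p ∈ R → q ∈ R ∨ q = c) →
      (∃ B : G.Subgraph, IsLeafBlock G B ∧ B.verts ⊆ R ∪ {c}) ∨
      (∃ C : G.Subgraph, IsIsolatedComponent G C ∧ C.verts ⊆ R ∪ {c}) := by
  classical
  intro n
  induction n with
  | zero =>
    intro R c u hcard hu _ _
    have : 0 < R.ncard := (Set.ncard_pos (Set.toFinite R)).mpr ⟨u, hu⟩
    omega
  | succ n ih =>
    intro R c u hcard hu hc hdangle
    obtain ⟨B, hB, huB⟩ := exists_block (G := G) u
    have hsub : B.verts ⊆ R ∪ {c} := block_verts_subset hB hdangle hc huB hu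
    by_cases hK1 : ∃ k, k ∈ B.verts ∧ IsCutVertex G k
    · by_cases hK2 : ∃ k1 k2, (k1 ∈ B.verts ∧ IsCutVertex G k1) ∧
          (k2 ∈ B.verts ∧ IsCutVertex G k2) ∧ k1 ≠ k2
      case neg =>
        obtain ⟨k, hk⟩ := hK1
        left
        refine ⟨B, ⟨hB, ⟨k, hk, ?_⟩⟩, hsub⟩
        intro k' hk'
        by_contra hne
        exact hK2 ⟨k', k, hk', hk, hne⟩
      case pos =>
        obtain ⟨k1, k2, hk1, hk2, hk12⟩ := hK2
        have hd : ∃ d, (d ∈ B.verts ∧ IsCutVertex G d) ∧ d ≠ c := by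
          by_cases h1 : k1 = c
          · exact ⟨k2, hk2, fun h => hk12 (h1.trans h.symm)⟩
          · exact ⟨k1, hk1, h1⟩
        obtain ⟨d, ⟨hdB, hdcut⟩, hdc⟩ := hd
        have hdR : d ∈ R := (hsub hdB).resolve_right hdc
        have hcd : c ≠ d := fun h => hc (h ▸ hdR)
        have ha : ∃ a, (a ∈ B.verts ∧ a ≠ d) ∧ (u = d ∨ a = u) := by
          by_cases hud : u = d
          · by_cases h1 : k1 = d
            · exact ⟨k2, ⟨hk2.1, fun h => hk12 (h1.trans h.symm)⟩, Or.inl hud⟩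
            · exact ⟨k1, ⟨hk1.1, h1⟩, Or.inl hud⟩
          · exact ⟨u, ⟨huB, hud⟩, Or.inr rfl⟩
        obtain ⟨a, ⟨haB, had⟩, hau⟩ := ha
        obtain ⟨p, q, hp, hq, hpd, hqd, hpq⟩ := cut_vertex_parts hdcut
        -- everything in B \ {d} is in `a`'s part
        have hBside : ∀ (t : V) (htB : t ∈ B.verts) (htd : t ≠ d),
            (G.induce {w | w ≠ d}).Reachable ⟨t, htd⟩ ⟨a, had⟩ := by
          have hconn := del_connected_of_twoConn hB.1 ⟨d, hdB⟩ haB had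
          intro t htB htd
          have hre := hconn ⟨t, ⟨htB, htd⟩⟩ ⟨a, ⟨haB, had⟩⟩
          exact hre.map (⟨fun s => ⟨s.1, s.2.2⟩, fun {s t} hst => B.adj_sub hst.2.2⟩ :
            (B.deleteVerts {d}).coe →g (G.induce {w | w ≠ d}))
        -- pick the separated side
        have hxch : ∃ (x : V) (hx : x ≠ d), G.Reachable x d ∧
            ¬ (G.induce {w | w ≠ d}).Reachable ⟨x, hx⟩ ⟨a, had⟩ := by
          by_cases hpa : (G.induce {w | w ≠ d}).Reachable ⟨p, hp⟩ ⟨a, had⟩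
          · exact ⟨q, hq, hqd, fun hqa => hpq (hpa.trans hqa.symm)⟩
          · exact ⟨p, hp, hpd, hpa⟩
        obtain ⟨x, hxd, hxreach, hxa⟩ := hxch
        by_cases hcx : (G.induce {w | w ≠ d}).Reachable ⟨x, hxd⟩ ⟨c, hcd⟩
        · -- c is on x's side; recurse into a's part
          set R' : Set V := {t : V | ∃ ht : t ≠ d,
            (G.induce {w | w ≠ d}).Reachable ⟨a, had⟩ ⟨t, ht⟩} with hR'
          have hac : a ≠ c := by
            intro h
            apply hxa
            have : (⟨c, hcd⟩ : ↥{w : V | w ≠ d}) = ⟨a, had⟩ := Subtype.ext h.symm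
            rw [← this]
            exact hcx
          have haR : a ∈ R := (hsub haB).resolve_right hac
          have hnac : ¬ (G.induce {w | w ≠ d}).Reachable ⟨a, had⟩ ⟨c, hcd⟩ :=
            fun hr => hxa (hcx.trans hr.symm)
          have hsub' : R' ⊆ R := by
            rintro t ⟨ht, hre⟩
            exact prop_part hdangle hcd ⟨a, had⟩ ⟨t, ht⟩ hre haR hnac
          have hdR' : d ∉ R' := by rintro ⟨ht, -⟩; exact ht rfl
          have haR' : a ∈ R' := ⟨had, SimpleGraph.Reachable.refl _⟩
          have hdangle' : ∀ p' q', G.Adj p' q' → p' ∈ R' → q' ∈ R' ∨ q' = d := by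
            rintro p' q' hadj ⟨hp', hre⟩
            by_cases hq' : q' = d
            · exact Or.inr hq'
            · refine Or.inl ⟨hq', hre.trans ?_⟩
              exact (SimpleGraph.Adj.reachable (by exact hadj :
                (G.induce {w | w ≠ d}).Adj ⟨p', hp'⟩ ⟨q', hq'⟩))
          have hcard' : R'.ncard ≤ n := by
            have hlt : R'.ncard < R.ncard :=
              Set.ncard_lt_ncard ((Set.ssubset_iff_of_subset hsub').mpr ⟨d, hdR, hdR'⟩)
                (Set.toFinite R)
            omega
          rcases ih R' d a hcard' haR' hdR' hdangle' with ⟨B', hB', hsub''⟩ | ⟨C, hC, hsub''⟩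
          · exact Or.inl ⟨B', hB', fun t ht => by
              rcases hsub'' ht with h | h
              · exact Or.inl (hsub' h)
              · exact Or.inl (h ▸ hdR)⟩
          · exact Or.inr ⟨C, hC, fun t ht => by
              rcases hsub'' ht with h | h
              · exact Or.inl (hsub' h)
              · exact Or.inl (h ▸ hdR)⟩
        · -- c is not on x's side; recurse into x's part
          set R' : Set V := {t : V | ∃ ht : t ≠ d,
            (G.induce {w | w ≠ d}).Reachable ⟨x, hxd⟩ ⟨t, ht⟩} with hR'
          obtain ⟨wxd⟩ := hxreach
          obtain ⟨y0, hy0d, hady0, hxy0⟩ := exists_nbr_part wxd hxd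
          have hy0R : y0 ∈ R := by
            rcases hdangle d y0 hady0 hdR with h | h
            · exact h
            · exfalso
              apply hcx
              have : (⟨y0, hy0d⟩ : ↥{w : V | w ≠ d}) = ⟨c, hcd⟩ := Subtype.ext h
              rw [← this]
              exact hxy0
          have hny0c : ¬ (G.induce {w | w ≠ d}).Reachable ⟨y0, hy0d⟩ ⟨c, hcd⟩ :=
            fun hr => hcx (hxy0.trans hr)
          have hsub' : R' ⊆ R := by
            rintro t ⟨ht, hre⟩
            exact prop_part hdangle hcd ⟨y0, hy0d⟩ ⟨t, ht⟩ (hxy0.symm.trans hre) hy0R hny0c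
          have hdR' : d ∉ R' := by rintro ⟨ht, -⟩; exact ht rfl
          have hxR' : x ∈ R' := ⟨hxd, SimpleGraph.Reachable.refl _⟩
          have hxR : x ∈ R := hsub' hxR'
          have hdangle' : ∀ p' q', G.Adj p' q' → p' ∈ R' → q' ∈ R' ∨ q' = d := by
            rintro p' q' hadj ⟨hp', hre⟩
            by_cases hq' : q' = d
            · exact Or.inr hq'
            · refine Or.inl ⟨hq', hre.trans ?_⟩
              exact (SimpleGraph.Adj.reachable (by exact hadj :
                (G.induce {w | w ≠ d}).Adj ⟨p', hp'⟩ ⟨q', hq'⟩))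
          have huR' : u ∉ R' := by
            rintro ⟨hud', hre⟩
            rcases hau with h | h
            · exact hud' h
            · apply hxa
              have : (⟨u, hud'⟩ : ↥{w : V | w ≠ d}) = ⟨a, had⟩ := Subtype.ext h.symm
              rw [← this]
              exact hre
          have hcard' : R'.ncard ≤ n := by
            have hlt : R'.ncard < R.ncard :=
              Set.ncard_lt_ncard ((Set.ssubset_iff_of_subset hsub').mpr ⟨u, hu, huR'⟩)
                (Set.toFinite R)
            omega
          rcases ih R' d x hcard' hxR' hdR' hdangle' with ⟨B', hB', hsub''⟩ | ⟨C, hC, hsub''⟩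
          · exact Or.inl ⟨B', hB', fun t ht => by
              rcases hsub'' ht with h | h
              · exact Or.inl (hsub' h)
              · exact Or.inl (h ▸ hdR)⟩
          · exact Or.inr ⟨C, hC, fun t ht => by
              rcases hsub'' ht with h | h
              · exact Or.inl (hsub' h)
              · exact Or.inl (h ▸ hdR)⟩
    · -- no cut vertex in B : it is a whole component
      right
      refine ⟨B, ⟨hB.1.1, ?_⟩, hsub⟩
      intro H' hle hconn'
      have hvsub : H'.verts ⊆ B.verts := by
        intro t ht
        have hre := hconn'.preconnected ⟨u, hle.1 huB⟩ ⟨t, ht⟩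
        refine walk_propagate (fun s => s.1 ∈ B.verts) ?_ hre huB
        intro s t' hst hsB
        by_contra htB
        exact hK1 ⟨s.1, hsB,
          block_isCutVertex_of_edge_leaving hB hsB (H'.adj_sub hst) htB⟩
      exact hB.2 H' hle (twoConnConv_of_le hle (Set.Subset.antisymm hvsub hle.1) hB.1 hconn')

end Aux7
section Aux8

open SimpleGraph

variable {V : Type*} {G : SimpleGraph V}

lemma block_adj_of_adj [Fintype V] {B : G.Subgraph} (hB : IsBlock G B) {a b : V}
    (ha : a ∈ B.verts) (hb : b ∈ B.verts) (hab : G.Adj a b) : B.Adj a b := by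
  classical
  let H' : G.Subgraph :=
    { verts := B.verts
      Adj := fun p q => B.Adj p q ∨ (p = a ∧ q = b) ∨ (p = b ∧ q = a)
      adj_sub := by
        rintro p q (hpq | ⟨rfl, rfl⟩ | ⟨rfl, rfl⟩)
        exacts [B.adj_sub hpq, hab, hab.symm]
      edge_vert := by
        rintro p q (hpq | ⟨rfl, rfl⟩ | ⟨rfl, rfl⟩)
        exacts [B.edge_vert hpq, ha, hb]
      symm := by
        constructor
        rintro p q (hpq | ⟨rfl, rfl⟩ | ⟨rfl, rfl⟩)
        exacts [Or.inl hpq.symm, Or.inr (Or.inr ⟨rfl, rfl⟩), Or.inr (Or.inl ⟨rfl, rfl⟩)] }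
  have hle : B ≤ H' := ⟨subset_rfl, fun {p q} hpq => Or.inl hpq⟩
  have hconn' : H'.coe.Connected := by
    refine SimpleGraph.Connected.mono ?_ hB.1.1
    intro s t hst
    exact Or.inl hst
  have heq := hB.2 H' hle (twoConnConv_of_le hle rfl hB.1 hconn')
  have hAdj : H'.Adj a b := Or.inr (Or.inl ⟨rfl, rfl⟩)
  rwa [heq] at hAdj

lemma not_isCutVertex_of_isolated [Fintype V] {v : V} (hiso : ∀ w, ¬ G.Adj v w) :
    ¬ IsCutVertex G v := by
  intro hcut
  obtain ⟨p, q, hp, hq, hpd, hqd, hpq⟩ := cut_vertex_parts hcut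
  obtain ⟨w⟩ := hpd
  exact (support_ne_of_isolated hiso w hp) v w.end_mem_support rfl

end Aux8
theorem stmt5 {V : Type*} [Fintype V] (G1 G2 : SimpleGraph V) (h : G1 ≤ G2)
    (Y2 : G2.Subgraph) (hY2 : IsLeafBlock G2 Y2) :
    (∃ Y1 : G1.Subgraph, IsLeafBlock G1 Y1 ∧ Y1.verts ⊆ Y2.verts ∧
        ∀ a b, Y1.Adj a b → Y2.Adj a b) ∨
    (∃ C : G1.Subgraph, IsIsolatedComponent G1 C ∧ C.verts ⊆ Y2.verts ∧
        ∀ a b, C.Adj a b → Y2.Adj a b) := by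
  classical
  obtain ⟨hBlock, v, ⟨hvY, hvcut⟩, hvuniq⟩ := hY2
  have hother : ∃ u, u ∈ Y2.verts ∧ u ≠ v := by
    by_contra hcon
    push_neg at hcon
    have hiso : ∀ w, ¬ G2.Adj v w := by
      intro w hadj
      have hle : Y2 ≤ G2.subgraphOfAdj hadj := by
        constructor
        · intro t ht
          rw [hcon t ht]
          exact Set.mem_insert _ _
        · intro p q hpq
          have hp := hcon p (Y2.edge_vert hpq)
          have hq := hcon q (Y2.edge_vert hpq.symm)
          exact absurd (Y2.adj_sub hpq) (by rw [hp, hq]; exact G2.loopless.irrefl v)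
      have heq := hBlock.2 _ hle (twoConnConv_subgraphOfAdj hadj)
      have hwY : w ∈ Y2.verts := heq ▸ (Set.mem_insert_of_mem v rfl)
      exact (G2.ne_of_adj hadj) (hcon w hwY).symm
    exact not_isCutVertex_of_isolated hiso hvcut
  obtain ⟨u0, hu0Y, hu0v⟩ := hother
  have hP2 : ∀ p q, G2.Adj p q → p ∈ Y2.verts → p ≠ v → q ∈ Y2.verts := by
    intro p q hadj hpY hpv
    by_contra hqY
    have hcut := block_isCutVertex_of_edge_leaving hBlock hpY hadj hqY
    exact hpv (hvuniq p ⟨hpY, hcut⟩)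
  have hdangle : ∀ p q, G1.Adj p q → p ∈ Y2.verts \ {v} → q ∈ Y2.verts \ {v} ∨ q = v := by
    rintro p q hadj ⟨hpY, hpv⟩
    have hq := hP2 p q (h hadj) hpY hpv
    by_cases hqv : q = v
    · exact Or.inr hqv
    · exact Or.inl ⟨hq, hqv⟩
  have hres := rec_main (G := G1) (Y2.verts \ {v}).ncard (Y2.verts \ {v}) v u0
    le_rfl ⟨hu0Y, hu0v⟩ (fun hmem => hmem.2 rfl) hdangle
  have hRsub : (Y2.verts \ {v}) ∪ {v} ⊆ Y2.verts := by
    rintro t (ht | ht)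
    · exact ht.1
    · rw [ht]
      exact hvY
  rcases hres with ⟨B, hBleaf, hBsub⟩ | ⟨C, hCiso, hCsub⟩
  · left
    refine ⟨B, hBleaf, fun t ht => hRsub (hBsub ht), ?_⟩
    intro a b hab
    exact block_adj_of_adj hBlock (hRsub (hBsub (B.edge_vert hab)))
      (hRsub (hBsub (B.edge_vert hab.symm))) (h (B.adj_sub hab))
  · right
    refine ⟨C, hCiso, fun t ht => hRsub (hCsub ht), ?_⟩
    intro a b hab
    exact block_adj_of_adj hBlock (hRsub (hCsub (C.edge_vert hab)))
      (hRsub (hCsub (C.edge_vert hab.symm))) (h (C.adj_sub hab))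
end
end

section
/- Let G be a graph with a connected component W, and let H be a 2-connected graph obtained from G by adding two new vertices s1, s2 and edges each incident to s1 or s2. Then H contains at least two edges joining {s1, s2} to W; moreover, if W has at least two vertices, then H contains two such edges sharing neither a Steiner endpoint nor a W-endpoint (i.e., two independent Steiner W-edges). -/
open SimpleGraph Sum

noncomputable section

private lemma reach_closed {V' : Type*} {H : SimpleGraph V'} {P : Set V'}
    (hP : ∀ a b, H.Adj a b → a ∈ P → b ∈ P) {a b : V'}
    (h : H.Reachable a b) : a ∈ P → b ∈ P := by
  obtain ⟨p⟩ := h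
  induction p with
  | nil => exact id
  | cons h' _ ih => exact fun ha => ih (hP _ _ h' ha)

private lemma cut_of_unreachable {V' : Type*} [Fintype V'] {H : SimpleGraph V'}
    (hc : H.Connected) {x a b : V'} (ha : a ≠ x) (hb : b ≠ x)
    (hnr : ¬ (H.induce {w | w ≠ x}).Reachable ⟨a, ha⟩ ⟨b, hb⟩) :
    IsCutVertex H x := by
  have h1 : numComponents H = 1 := by
    rw [numComponents, Nat.card_eq_one_iff_unique]
    refine ⟨⟨fun c d => ?_⟩, ⟨H.connectedComponentMk (hc.nonempty.some)⟩⟩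
    obtain ⟨u, rfl⟩ := c.exists_rep
    obtain ⟨v, rfl⟩ := d.exists_rep
    exact ConnectedComponent.sound (hc.preconnected u v)
  have h2 : 1 < numComponents (H.induce {w | w ≠ x}) := by
    rw [numComponents, Finite.one_lt_card_iff_nontrivial]
    exact ⟨_, _, fun h => hnr (ConnectedComponent.exact h)⟩
  rw [IsCutVertex, h1]
  exact h2

private lemma mem_supp_of_adj {V : Type*} {G : SimpleGraph V} {c : G.ConnectedComponent}
    {u w : V} (hu : u ∈ c.supp) (h : G.Adj u w) : w ∈ c.supp := by
  rw [ConnectedComponent.mem_supp_iff] at hu ⊢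
  exact (ConnectedComponent.sound h.symm.reachable).trans hu

private lemma no_allW {V : Type*} [Fintype V] (G : SimpleGraph V)
    (H : SimpleGraph (V ⊕ Fin 2))
    (hGH : ∀ a b : V, H.Adj (inl a) (inl b) ↔ G.Adj a b)
    (hH : TwoConnConv H)
    (c : G.ConnectedComponent) (u0 : V)
    (hall : ∀ j w, w ∈ c.supp → H.Adj (inr j) (inl w) → w = u0)
    (w1 : V) (hw1 : w1 ∈ c.supp) (hne : w1 ≠ u0) : False := by
  have ha : (inl w1 : V ⊕ Fin 2) ≠ inl u0 := by simpa using hne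
  have hb : (inr 0 : V ⊕ Fin 2) ≠ inl u0 := by simp
  refine hH.2 (inl u0) (cut_of_unreachable hH.1 ha hb fun hr => ?_)
  have hres := reach_closed (P := {y : {z : V ⊕ Fin 2 // z ≠ inl u0} |
      ∃ w, (y : V ⊕ Fin 2) = inl w ∧ w ∈ c.supp}) ?_ hr ⟨w1, rfl, hw1⟩
  · obtain ⟨w, hw, -⟩ := hres
    simp at hw
  · rintro ⟨ya, hya⟩ ⟨yb, hyb⟩ hadj ⟨w, hw, hwc⟩
    simp only at hw
    subst hw
    have hadj' : H.Adj (inl w) yb := hadj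
    cases yb with
    | inl w' => exact ⟨w', rfl, mem_supp_of_adj hwc ((hGH w w').mp hadj')⟩
    | inr j =>
      have := hall j w hwc hadj'.symm
      exact (hya (by rw [this])).elim

private lemma no_allS {V : Type*} [Fintype V] (G : SimpleGraph V)
    (H : SimpleGraph (V ⊕ Fin 2))
    (hGH : ∀ a b : V, H.Adj (inl a) (inl b) ↔ G.Adj a b)
    (hH : TwoConnConv H)
    (c : G.ConnectedComponent) (i0 : Fin 2) (u0 : V) (hu0 : u0 ∈ c.supp)
    (hall : ∀ j w, w ∈ c.supp → H.Adj (inr j) (inl w) → j = i0) : False := by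
  have ha : (inl u0 : V ⊕ Fin 2) ≠ inr i0 := by simp
  have hne1 : (i0 + 1 : Fin 2) ≠ i0 := by fin_cases i0 <;> decide
  have hb : (inr (i0 + 1) : V ⊕ Fin 2) ≠ inr i0 := by simp [hne1]
  refine hH.2 (inr i0) (cut_of_unreachable hH.1 ha hb fun hr => ?_)
  have hres := reach_closed (P := {y : {z : V ⊕ Fin 2 // z ≠ inr i0} |
      ∃ w, (y : V ⊕ Fin 2) = inl w ∧ w ∈ c.supp}) ?_ hr ⟨u0, rfl, hu0⟩
  · obtain ⟨w, hw, -⟩ := hres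
    simp at hw
  · rintro ⟨ya, hya⟩ ⟨yb, hyb⟩ hadj ⟨w, hw, hwc⟩
    simp only at hw
    subst hw
    have hadj' : H.Adj (inl w) yb := hadj
    cases yb with
    | inl w' => exact ⟨w', rfl, mem_supp_of_adj hwc ((hGH w w').mp hadj')⟩
    | inr j =>
      have := hall j w hwc hadj'.symm
      exact (hyb (by rw [this])).elim

theorem stmt8 {V : Type*} [Fintype V] (G : SimpleGraph V)
    (H : SimpleGraph (V ⊕ Fin 2))
    (hGH : ∀ a b : V, H.Adj (inl a) (inl b) ↔ G.Adj a b)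
    (hH : TwoConnConv H)
    (c : G.ConnectedComponent) :
    (∃ (i j : Fin 2) (u w : V), u ∈ c.supp ∧ w ∈ c.supp ∧
        H.Adj (inr i) (inl u) ∧ H.Adj (inr j) (inl w) ∧ (i ≠ j ∨ u ≠ w)) ∧
    (1 < c.supp.ncard → ∃ (i j : Fin 2) (u w : V), u ∈ c.supp ∧ w ∈ c.supp ∧
        H.Adj (inr i) (inl u) ∧ H.Adj (inr j) (inl w) ∧ i ≠ j ∧ u ≠ w) := by
  classical
  obtain ⟨v0, hv0⟩ := c.exists_rep
  have hv0c : v0 ∈ c.supp := by rw [ConnectedComponent.mem_supp_iff]; exact hv0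
  have key : ∃ i u, u ∈ c.supp ∧ H.Adj (inr i) (inl u) := by
    have hr : H.Reachable (inl v0) (inr 0) := hH.1.preconnected _ _
    have hres := reach_closed (P := {x : V ⊕ Fin 2 | (∃ u, x = inl u ∧ u ∈ c.supp) ∨
        ∃ i u, u ∈ c.supp ∧ H.Adj (inr i) (inl u)}) ?_ hr (Or.inl ⟨v0, rfl, hv0c⟩)
    · rcases hres with ⟨u, h, -⟩ | h
      · exact absurd h (by simp)
      · exact h
    · rintro a b hadj (⟨u, rfl, hu⟩ | h)
      · cases b with
        | inl w => exact Or.inl ⟨w, rfl, mem_supp_of_adj hu ((hGH u w).mp hadj)⟩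
        | inr j => exact Or.inr ⟨j, u, hu, hadj.symm⟩
      · exact Or.inr h
  constructor
  · by_contra hcon
    push_neg at hcon
    obtain ⟨i0, u0, hu0, he0⟩ := key
    exact no_allS G H hGH hH c i0 u0 hu0
      (fun j w hw hadj => (hcon j i0 w u0 hw hu0 hadj he0).1)
  · intro hcard
    by_contra hcon
    push_neg at hcon
    obtain ⟨i0, u0, hu0, he0⟩ := key
    by_cases hall : ∀ j w, w ∈ c.supp → H.Adj (inr j) (inl w) → w = u0
    · obtain ⟨w1, hw1, hne⟩ := Set.exists_ne_of_one_lt_ncard hcard u0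
      exact no_allW G H hGH hH c u0 hall w1 hw1 hne
    · push_neg at hall
      obtain ⟨j1, w1, hw1, he1, hne1⟩ := hall
      have hj1 : j1 = i0 := by
        by_contra hj
        exact hne1 (hcon j1 i0 w1 u0 hw1 hu0 he1 he0 hj)
      subst hj1
      refine no_allS G H hGH hH c j1 u0 hu0 ?_
      intro k x hx hek
      by_contra hk
      have h1 : x = u0 := hcon k j1 x u0 hx hu0 hek he0 hk
      have h2 : x = w1 := hcon k j1 x w1 hx hw1 hek he1 hk
      exact hne1 (h2.symm.trans h1)
end
end

section
/- Let G be a connected graph embedded in the Euclidean plane that is not 2-connected, with leaf blocks Y1, ..., Ym. Let C be a smallest disk containing at least one interior vertex of each leaf block, with centre s0 and radius r. Form the graph G^SD by adding the point s0 as a new vertex and, for each leaf block Yi, adding an edge from s0 to a closest interior vertex of Yi. Then G^SD is 2-connected. -/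
open SimpleGraph Sum

noncomputable section

namespace Stmt9Aux
variable {V : Type*}

-- ===== from help1 =====
lemma numComponents_eq_one {G : SimpleGraph V} (h : G.Connected) : numComponents G = 1 := by
  rw [numComponents, Nat.card_eq_one_iff_unique]
  refine ⟨⟨fun c d => ?_⟩, ⟨G.connectedComponentMk h.nonempty.some⟩⟩
  refine ConnectedComponent.ind (fun v => ConnectedComponent.ind (fun w => ?_) d) c
  exact ConnectedComponent.sound (h.preconnected v w)

lemma connected_of_le_one [Finite V] [Nonempty V] {G : SimpleGraph V}
    (h : numComponents G ≤ 1) : G.Connected := by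
  have h1 : numComponents G = 1 := le_antisymm h (by
    rw [numComponents]
    exact Nat.one_le_iff_ne_zero.2 (Nat.card_ne_zero.2
      ⟨⟨G.connectedComponentMk (Classical.arbitrary V)⟩, inferInstance⟩))
  rw [numComponents, Nat.card_eq_one_iff_unique] at h1
  have := h1.1
  exact ⟨fun u v => ConnectedComponent.exact (Subsingleton.elim _ _)⟩

lemma not_cut_of_conn {A : SimpleGraph V} {w : V} (hA : A.Connected)
    (h2 : (A.induce {p | p ≠ w}).Connected) : ¬ IsCutVertex A w := by
  unfold IsCutVertex
  rw [numComponents_eq_one hA, numComponents_eq_one h2]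
  exact lt_irrefl 1

lemma del_connected [Finite V] {A : SimpleGraph V} {w : V} (hA : A.Connected)
    (h : ¬ IsCutVertex A w) (hne : Nonempty {p : V // p ≠ w}) :
    (A.induce {p | p ≠ w}).Connected := by
  unfold IsCutVertex at h
  rw [numComponents_eq_one hA] at h
  have : Nonempty ({p : V | p ≠ w} : Set V) := hne
  exact connected_of_le_one (by omega)

lemma nontrivial_components_of_cut [Finite V] {G : SimpleGraph V} {x : V}
    (hconn : G.Connected) (h : IsCutVertex G x) :
    Nontrivial (G.induce {w | w ≠ x}).ConnectedComponent := by
  unfold IsCutVertex at h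
  rw [numComponents_eq_one hconn] at h
  rw [numComponents] at h
  exact Finite.one_lt_card_iff_nontrivial.mp h

-- ===== from help2 =====
structure CompLike (G : SimpleGraph V) (x : V) (D : Set V) : Prop where
  nonempty : D.Nonempty
  not_mem : x ∉ D
  closed : ∀ ⦃a b : V⦄, a ∈ D → G.Adj a b → b ≠ x → b ∈ D
  conn : ∀ a b (_ : a ∈ D) (_ : b ∈ D) (ha' : a ≠ x) (hb' : b ≠ x),
    (G.induce {w | w ≠ x}).Reachable ⟨a, ha'⟩ ⟨b, hb'⟩

def comp (G : SimpleGraph V) (x : V) (c : (G.induce {w | w ≠ x}).ConnectedComponent) : Set V :=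
  {w | ∃ h : w ≠ x, (G.induce {w | w ≠ x}).connectedComponentMk ⟨w, h⟩ = c}

lemma compLike_comp (G : SimpleGraph V) (x : V) (c : (G.induce {w | w ≠ x}).ConnectedComponent) :
    CompLike G x (comp G x c) := by
  constructor
  · obtain ⟨v, hv⟩ := Quot.exists_rep c
    exact ⟨v.1, v.2, hv⟩
  · rintro ⟨h, -⟩; exact h rfl
  · rintro a b ⟨ha, hmk⟩ hadj hbx
    refine ⟨hbx, ?_⟩
    have : (G.induce {w | w ≠ x}).Reachable ⟨b, hbx⟩ ⟨a, ha⟩ :=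
      (Adj.reachable (by exact hadj : (G.induce {w | w ≠ x}).Adj ⟨a, ha⟩ ⟨b, hbx⟩)).symm
    exact (ConnectedComponent.sound this).trans hmk
  · rintro a b ⟨ha, hmk⟩ ⟨hb, hmk'⟩ ha' hb'
    exact ConnectedComponent.exact (hmk.trans hmk'.symm)

lemma CompLike.walk_closed {G : SimpleGraph V} {x : V} {D : Set V} (hD : CompLike G x D) :
    ∀ {a b : {w : V // w ∈ {w | w ≠ x}}}, (G.induce {w | w ≠ x}).Walk a b → a.1 ∈ D → b.1 ∈ D := by
  intro a b p
  induction p with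
  | nil => exact id
  | @cons u v w h q ih => intro hu; exact ih (hD.closed hu (by exact h) v.2)

lemma exists_adj_of_walk {G : SimpleGraph V} {x : V} {D : Set V}
    (hcl : ∀ ⦃a b : V⦄, a ∈ D → G.Adj a b → b ≠ x → b ∈ D) (hx : x ∉ D) :
    ∀ {d c : V}, G.Walk d c → c = x → d ∈ D → ∃ e ∈ D, G.Adj e x := by
  intro d c p
  induction p with
  | nil => intro he hd; exact absurd (he ▸ hd) hx
  | @cons u v w h q ih =>
    intro he hu
    by_cases hv : v = x
    · subst hv; exact ⟨u, hu, h⟩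
    · exact ih he (hcl hu h hv)

lemma reach_avoid {G : SimpleGraph V} {x z : V} {D : Set V}
    (hcl : ∀ ⦃a b : V⦄, a ∈ D → G.Adj a b → b ≠ x → b ∈ D) (hzD : z ∈ D) :
    ∀ {w c : V}, G.Walk w c → c = x → w ∉ D → ∀ (hw : w ≠ z) (hx' : x ≠ z),
      (G.induce {a | a ≠ z}).Reachable ⟨w, hw⟩ ⟨x, hx'⟩ := by
  intro w c p
  induction p with
  | @nil u =>
    intro he hw hwz hxz
    rw [show (⟨u, hwz⟩ : {a : V // a ∈ {a | a ≠ z}}) = ⟨x, hxz⟩ from Subtype.ext he]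
  | @cons u v w h q ih =>
    intro he hu hwz hxz
    by_cases hv : v ∈ D
    · by_cases hux : u = x
      · rw [show (⟨u, hwz⟩ : {a : V // a ∈ {a | a ≠ z}}) = ⟨x, hxz⟩ from Subtype.ext hux]
      · exact absurd (hcl hv h.symm hux) hu
    · have hvz : v ≠ z := fun e => hv (e ▸ hzD)
      have : (G.induce {a | a ≠ z}).Adj ⟨u, hwz⟩ ⟨v, hvz⟩ := h
      exact this.reachable.trans (ih he hv hvz hxz)

-- ===== from help3 =====
def indSub (G : SimpleGraph V) (s : Set V) : G.Subgraph where
  verts := s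
  Adj a b := G.Adj a b ∧ a ∈ s ∧ b ∈ s
  adj_sub h := h.1
  edge_vert h := h.2.1
  symm := ⟨fun _ _ h => ⟨h.1.symm, h.2.2, h.2.1⟩⟩

instance instFiniteSubgraph [Finite V] (G : SimpleGraph V) : Finite G.Subgraph := by
  have : Function.Injective (fun H : G.Subgraph => (H.verts, H.Adj)) := by
    intro H1 H2 h
    simp only [Prod.mk.injEq] at h
    exact SimpleGraph.Subgraph.ext h.1 h.2
  exact Finite.of_injective _ this

lemma exists_block_above [Finite V] {G : SimpleGraph V} (H : G.Subgraph)
    (hH : TwoConnConv H.coe) : ∃ B : G.Subgraph, H ≤ B ∧ IsBlock G B := by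
  obtain ⟨B, hB, hmax⟩ := Set.Finite.exists_maximalFor (id : G.Subgraph → G.Subgraph)
    {H' | H ≤ H' ∧ TwoConnConv H'.coe} (Set.toFinite _) ⟨H, le_refl H, hH⟩
  refine ⟨B, hB.1, hB.2, fun H' hle h2 => ?_⟩
  exact le_antisymm (hmax ⟨hB.1.trans hle, h2⟩ hle) hle

-- ===== from help4 =====
section TransferLemmas
variable {G : SimpleGraph V} {x : V} {D : Set V}

lemma walk_to_ind (hD : CompLike G x D) :
    ∀ {a b : ↑{w : V | w ≠ x}} (_ : (G.induce {w | w ≠ x}).Walk a b), a.1 ∈ D → b.1 ∈ D →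
    ∀ (aH : a.1 ∈ (indSub G (D ∪ {x})).verts) (bH : b.1 ∈ (indSub G (D ∪ {x})).verts),
      (indSub G (D ∪ {x})).coe.Reachable ⟨a.1, aH⟩ ⟨b.1, bH⟩ := by
  intro a b p
  induction p with
  | nil => intro _ _ aH bH; exact Reachable.refl _
  | @cons u v w h q ih =>
    intro hu hw aH bH
    have hvD : v.1 ∈ D := hD.closed hu h v.2
    have hadj : (indSub G (D ∪ {x})).coe.Adj ⟨u.1, aH⟩ ⟨v.1, Or.inl hvD⟩ :=
      ⟨h, aH, Or.inl hvD⟩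
    exact hadj.reachable.trans (ih hvD hw (Or.inl hvD) bH)

lemma walk_to_ind_mx (hD : CompLike G x D) (xV : ↥(indSub G (D ∪ {x})).verts) (hxV : xV.1 = x) :
    ∀ {a b : ↑{w : V | w ≠ x}} (_ : (G.induce {w | w ≠ x}).Walk a b), a.1 ∈ D → b.1 ∈ D →
    ∀ (aH : a.1 ∈ (indSub G (D ∪ {x})).verts) (bH : b.1 ∈ (indSub G (D ∪ {x})).verts)
      (hane : (⟨a.1, aH⟩ : ↥(indSub G (D ∪ {x})).verts) ≠ xV)
      (hbne : (⟨b.1, bH⟩ : ↥(indSub G (D ∪ {x})).verts) ≠ xV),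
      ((indSub G (D ∪ {x})).coe.induce {p | p ≠ xV}).Reachable ⟨⟨a.1, aH⟩, hane⟩ ⟨⟨b.1, bH⟩, hbne⟩ := by
  intro a b p
  induction p with
  | nil => intro _ _ aH bH hane hbne; exact Reachable.refl _
  | @cons u v w h q ih =>
    intro hu hw aH bH hane hbne
    have hvD : v.1 ∈ D := hD.closed hu h v.2
    have hvne : (⟨v.1, Or.inl hvD⟩ : ↥(indSub G (D ∪ {x})).verts) ≠ xV :=
      fun hh => v.2 ((congrArg Subtype.val hh).trans hxV)
    have hadj : ((indSub G (D ∪ {x})).coe.induce {p | p ≠ xV}).Adj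
        ⟨⟨u.1, aH⟩, hane⟩ ⟨⟨v.1, Or.inl hvD⟩, hvne⟩ := ⟨h, aH, Or.inl hvD⟩
    exact hadj.reachable.trans (ih hvD hw (Or.inl hvD) bH hvne hbne)

lemma walk_to_ind_mz (hD : CompLike G x D) {z : V}
    (zV : ↥(indSub G (D ∪ {x})).verts) (hzV : zV.1 = z) :
    ∀ {a c : ↑{w : V | w ≠ z}} (_ : (G.induce {w | w ≠ z}).Walk a c), c.1 = x → a.1 ∈ D →
    ∀ (aH : a.1 ∈ (indSub G (D ∪ {x})).verts) (xH : x ∈ (indSub G (D ∪ {x})).verts)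
      (hane : (⟨a.1, aH⟩ : ↥(indSub G (D ∪ {x})).verts) ≠ zV)
      (hxne : (⟨x, xH⟩ : ↥(indSub G (D ∪ {x})).verts) ≠ zV),
      ((indSub G (D ∪ {x})).coe.induce {p | p ≠ zV}).Reachable ⟨⟨a.1, aH⟩, hane⟩ ⟨⟨x, xH⟩, hxne⟩ := by
  intro a c p
  induction p with
  | @nil u =>
    intro he hu aH xH hane hxne
    exact absurd hu (by rw [he] at hu ⊢; exact fun _ => hD.not_mem hu)
  | @cons u v w h q ih =>
    intro he hu aH xH hane hxne
    by_cases hvx : v.1 = x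
    · have hadj : ((indSub G (D ∪ {x})).coe.induce {p | p ≠ zV}).Adj
          ⟨⟨u.1, aH⟩, hane⟩ ⟨⟨x, xH⟩, hxne⟩ := by
        refine ⟨?_, aH, xH⟩
        have : G.Adj u.1 v.1 := h
        rwa [hvx] at this
      exact hadj.reachable
    · have hvD : v.1 ∈ D := hD.closed hu h hvx
      have hvne : (⟨v.1, Or.inl hvD⟩ : ↥(indSub G (D ∪ {x})).verts) ≠ zV :=
        fun hh => v.2 ((congrArg Subtype.val hh).trans hzV)
      have hadj : ((indSub G (D ∪ {x})).coe.induce {p | p ≠ zV}).Adj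
          ⟨⟨u.1, aH⟩, hane⟩ ⟨⟨v.1, Or.inl hvD⟩, hvne⟩ := ⟨h, aH, Or.inl hvD⟩
      exact hadj.reachable.trans (ih he hvD (Or.inl hvD) xH hvne hxne)

end TransferLemmas

-- ===== the key block-extraction lemma =====
lemma key [Finite V] {G : SimpleGraph V} (hconn : G.Connected) :
    ∀ n : ℕ, ∀ (x : V) (D : Set V), D.ncard ≤ n → IsCutVertex G x → CompLike G x D →
      ∃ Y : G.Subgraph, IsLeafBlock G Y ∧ ∀ w ∈ Y.verts, ¬ IsCutVertex G w → w ∈ D := by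
  intro n
  induction n with
  | zero =>
    intro x D hcard _ hD
    have := Set.ncard_pos (Set.toFinite D) |>.mpr hD.nonempty
    omega
  | succ n ih =>
    intro x D hcard hx hD
    by_cases hz : ∃ z ∈ D, IsCutVertex G z
    · -- recurse into a smaller component
      obtain ⟨z, hzD, hzc⟩ := hz
      have hxz : x ≠ z := fun e => hD.not_mem (e ▸ hzD)
      have hnt := nontrivial_components_of_cut hconn hzc
      obtain ⟨c', hc'⟩ := exists_ne ((G.induce {w | w ≠ z}).connectedComponentMk ⟨x, hxz⟩)
      have hD' := compLike_comp G z c'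
      have hsub : comp G z c' ⊆ D := by
        intro w hw
        obtain ⟨hwz, hmk⟩ := hw
        by_contra hwD
        have hreach : (G.induce {a | a ≠ z}).Reachable ⟨w, hwz⟩ ⟨x, hxz⟩ :=
          (hconn.preconnected w x).elim fun p =>
            reach_avoid hD.closed hzD p rfl hwD hwz hxz
        exact hc' (hmk ▸ ConnectedComponent.sound hreach)
      have hzD' : z ∉ comp G z c' := hD'.not_mem
      have hlt : (comp G z c').ncard < D.ncard :=
        Set.ncard_lt_ncard (HasSubset.Subset.ssubset_of_ne hsub
          (fun e => hzD' (e ▸ hzD))) (Set.toFinite D)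
      obtain ⟨Y, hY, hint⟩ := ih z (comp G z c') (by omega) hzc hD'
      exact ⟨Y, hY, fun w hw hc => hsub (hint w hw hc)⟩
    · -- no cut vertex inside D : build the leaf block on D ∪ {x}
      push_neg at hz
      obtain ⟨d0, hd0⟩ := hD.nonempty
      have hd0x : d0 ≠ x := fun e => hD.not_mem (e ▸ hd0)
      obtain ⟨ds, hdsD, hds⟩ := (hconn.preconnected d0 x).elim fun p =>
        exists_adj_of_walk hD.closed hD.not_mem p rfl hd0
      have hdsx : ds ≠ x := fun e => hD.not_mem (e ▸ hdsD)
      set H := indSub G (D ∪ {x}) with hHdef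
      have hxH : x ∈ H.verts := Or.inr rfl
      -- H.coe is connected
      have hto_x : ∀ p : ↥H.verts, H.coe.Reachable p ⟨x, hxH⟩ := by
        rintro ⟨a, ha⟩
        by_cases hax : a = x
        · rw [show (⟨a, ha⟩ : ↥H.verts) = ⟨x, hxH⟩ from Subtype.ext hax]
        · have haD : a ∈ D := ha.elim id fun h => absurd h hax
          have h1 : H.coe.Reachable ⟨a, ha⟩ ⟨ds, Or.inl hdsD⟩ :=
            (hD.conn a ds haD hdsD hax hdsx).elim fun p => walk_to_ind hD p haD hdsD ha (Or.inl hdsD)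
          have h2 : H.coe.Adj ⟨ds, Or.inl hdsD⟩ ⟨x, hxH⟩ := ⟨hds, Or.inl hdsD, hxH⟩
          exact h1.trans h2.reachable
      have hHconn : H.coe.Connected := by
        rw [connected_iff]
        exact ⟨fun a b => (hto_x a).trans (hto_x b).symm, ⟨⟨x, hxH⟩⟩⟩
      -- H.coe has no cut vertex
      have hHnc : ∀ w : ↥H.verts, ¬ IsCutVertex H.coe w := by
        rintro ⟨wv, hw⟩
        apply not_cut_of_conn hHconn
        by_cases hwx : wv = x
        · -- deleting x : D-part is connected
          have hto : ∀ p : ↑{p : ↥H.verts | p ≠ ⟨wv, hw⟩},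
              (H.coe.induce {p | p ≠ ⟨wv, hw⟩}).Reachable p
                ⟨⟨d0, Or.inl hd0⟩, fun hh => hd0x ((congrArg Subtype.val hh).trans hwx)⟩ := by
            rintro ⟨⟨a, haH⟩, hane⟩
            have hax : a ≠ x := fun e => hane (Subtype.ext (e.trans hwx.symm))
            have haD : a ∈ D := haH.elim id fun h => absurd h hax
            exact (hD.conn a d0 haD hd0 hax hd0x).elim fun p =>
              walk_to_ind_mx hD ⟨wv, hw⟩ hwx p haD hd0 _ _ _ _
          rw [connected_iff]
          exact ⟨fun a b => (hto a).trans (hto b).symm,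
            ⟨⟨⟨d0, Or.inl hd0⟩, fun hh => hd0x ((congrArg Subtype.val hh).trans hwx)⟩⟩⟩
        · -- deleting z ∈ D : everything reaches x
          have hwD : wv ∈ D := hw.elim id fun h => absurd h hwx
          have hGz : (G.induce {p | p ≠ wv}).Connected :=
            del_connected hconn (hz wv hwD) ⟨⟨x, fun e => hD.not_mem (e ▸ hwD)⟩⟩
          have hxne : (⟨x, hxH⟩ : ↥H.verts) ∈ {p : ↥H.verts | p ≠ ⟨wv, hw⟩} :=
            fun hh => hD.not_mem (by
              have e : wv = x := congrArg Subtype.val hh.symm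
              exact e ▸ hwD)
          have hto : ∀ p : ↑{p : ↥H.verts | p ≠ ⟨wv, hw⟩},
              (H.coe.induce {p | p ≠ ⟨wv, hw⟩}).Reachable p ⟨⟨x, hxH⟩, hxne⟩ := by
            rintro ⟨⟨a, haH⟩, hane⟩
            by_cases hax : a = x
            · rw [show (⟨⟨a, haH⟩, hane⟩ : ↑{p : ↥H.verts | p ≠ ⟨wv, hw⟩}) = ⟨⟨x, hxH⟩, hxne⟩
                from Subtype.ext (Subtype.ext hax)]
            · have haD : a ∈ D := haH.elim id fun h => absurd h hax
              have hawv : a ≠ wv := fun e => hane (Subtype.ext e)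
              have hxwv : x ≠ wv := fun e => hD.not_mem (e ▸ hwD)
              exact ((hGz.preconnected ⟨a, hawv⟩ ⟨x, hxwv⟩)).elim fun p =>
                walk_to_ind_mz hD ⟨wv, hw⟩ rfl p rfl haD _ _ _ _
          rw [connected_iff]
          exact ⟨fun a b => (hto a).trans (hto b).symm, ⟨⟨⟨x, hxH⟩, hxne⟩⟩⟩
      -- extend to a block
      obtain ⟨B, hHB, hBblock⟩ := exists_block_above H ⟨hHconn, hHnc⟩
      have hxB : x ∈ B.verts := hHB.1 hxH
      have hd0B : d0 ∈ B.verts := hHB.1 (Or.inl hd0)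
      -- all vertices of B lie in D ∪ {x}
      have hBsub : ∀ w ∈ B.verts, w ∈ D ∪ {x} := by
        intro w hwB
        by_contra hwn
        have hwx : w ≠ x := fun e => hwn (Or.inr e)
        have hwD : w ∉ D := fun h => hwn (Or.inl h)
        have hne1 : (⟨d0, hd0B⟩ : ↥B.verts) ≠ ⟨x, hxB⟩ :=
          fun hh => hd0x (congrArg Subtype.val hh)
        have hne2 : (⟨w, hwB⟩ : ↥B.verts) ≠ ⟨x, hxB⟩ :=
          fun hh => hwx (congrArg Subtype.val hh)
        have hBdel : (B.coe.induce {p | p ≠ ⟨x, hxB⟩}).Connected :=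
          del_connected hBblock.1.1 (hBblock.1.2 ⟨x, hxB⟩) ⟨⟨⟨d0, hd0B⟩, hne1⟩⟩
        have hr := hBdel.preconnected ⟨⟨d0, hd0B⟩, hne1⟩ ⟨⟨w, hwB⟩, hne2⟩
        have hr' : (G.induce {w | w ≠ x}).Reachable ⟨d0, hd0x⟩ ⟨w, hwx⟩ :=
          hr.map (⟨fun p => ⟨p.1.1, fun e => p.2 (Subtype.ext e)⟩,
            fun hab => B.adj_sub hab⟩ :
            (B.coe.induce {p | p ≠ ⟨x, hxB⟩}) →g (G.induce {w | w ≠ x}))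
        exact hwD (hr'.elim fun p => hD.walk_closed p hd0)
      refine ⟨B, ⟨hBblock, x, ⟨hxB, hx⟩, ?_⟩, ?_⟩
      · rintro v ⟨hvB, hvc⟩
        rcases hBsub v hvB with h | h
        · exact absurd hvc (hz v h)
        · exact h
      · intro w hwB hwc
        rcases hBsub w hwB with h | h
        · exact h
        · exact absurd (h ▸ hx) hwc
end Stmt9Aux

theorem stmt9 {V : Type*} [Fintype V] (G : SimpleGraph V)
    (pos : V → EuclideanSpace ℝ (Fin 2)) (s0 : EuclideanSpace ℝ (Fin 2)) (r : ℝ)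
    (hconn : G.Connected) (hnot2 : ¬ TwoConnConv G)
    -- the disk of radius `r` about `s0` meets the interior of every leaf block
    (hcov : ∀ Y : G.Subgraph, IsLeafBlock G Y →
      ∃ y ∈ Y.verts, ¬ IsCutVertex G y ∧ dist s0 (pos y) ≤ r)
    -- `r` is the smallest such radius (over all centres)
    (hmin : ∀ (z : EuclideanSpace ℝ (Fin 2)) (r' : ℝ),
      (∀ Y : G.Subgraph, IsLeafBlock G Y →
        ∃ y ∈ Y.verts, ¬ IsCutVertex G y ∧ dist z (pos y) ≤ r') → r ≤ r')
    -- `f` chooses, for each leaf block, a closest interior vertex to `s0`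
    (f : G.Subgraph → V)
    (hf : ∀ Y : G.Subgraph, IsLeafBlock G Y → f Y ∈ Y.verts ∧ ¬ IsCutVertex G (f Y) ∧
      ∀ z ∈ Y.verts, ¬ IsCutVertex G z → dist s0 (pos (f Y)) ≤ dist s0 (pos z))
    -- `GSD` is `G` plus the new vertex `s0` joined to the chosen vertices
    (GSD : SimpleGraph (V ⊕ Unit))
    (h1 : ∀ a b : V, GSD.Adj (inl a) (inl b) ↔ G.Adj a b)
    (h2 : ∀ y : V, GSD.Adj (inr ()) (inl y) ↔ ∃ Y : G.Subgraph, IsLeafBlock G Y ∧ f Y = y) :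
    TwoConnConv GSD := by
  classical
  have hV : Nonempty V := hconn.nonempty
  obtain ⟨x0, hx0⟩ : ∃ x, IsCutVertex G x := by
    by_contra h; push_neg at h; exact hnot2 ⟨hconn, h⟩
  have getLeaf : ∀ (x : V), IsCutVertex G x →
      ∀ c : (G.induce {w | w ≠ x}).ConnectedComponent,
      ∃ Y : G.Subgraph, IsLeafBlock G Y ∧
        ∀ w ∈ Y.verts, ¬ IsCutVertex G w → w ∈ Stmt9Aux.comp G x c :=
    fun x hx c => Stmt9Aux.key hconn (Stmt9Aux.comp G x c).ncard x (Stmt9Aux.comp G x c)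
      le_rfl hx (Stmt9Aux.compLike_comp G x c)
  -- the core reachability fact
  have core : ∀ (xv a : V) (ha : a ≠ xv), ∃ Y : G.Subgraph,
      ∃ (hY : IsLeafBlock G Y) (hfv : f Y ≠ xv),
      (G.induce {w | w ≠ xv}).Reachable ⟨a, ha⟩ ⟨f Y, hfv⟩ := by
    intro xv a ha
    by_cases hc : IsCutVertex G xv
    · obtain ⟨Y, hY, hint⟩ := getLeaf xv hc
        ((G.induce {w | w ≠ xv}).connectedComponentMk ⟨a, ha⟩)
      obtain ⟨hfY1, hfY2, -⟩ := hf Y hY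
      obtain ⟨hfne, hmk⟩ := hint _ hfY1 hfY2
      exact ⟨Y, hY, hfne, (ConnectedComponent.exact hmk).symm⟩
    · have hxv0 : xv ≠ x0 := fun e => hc (e ▸ hx0)
      have hnt := Stmt9Aux.nontrivial_components_of_cut hconn hx0
      obtain ⟨c', hc'⟩ := exists_ne ((G.induce {w | w ≠ x0}).connectedComponentMk ⟨xv, hxv0⟩)
      obtain ⟨Y, hY, hint⟩ := getLeaf x0 hx0 c'
      obtain ⟨hfY1, hfY2, -⟩ := hf Y hY
      obtain ⟨hfx0, hmk⟩ := hint _ hfY1 hfY2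
      have hfv : f Y ≠ xv := by
        intro e
        apply hc'
        rw [← hmk]
        congr 1
        exact Subtype.ext e
      have hGxv : (G.induce {w | w ≠ xv}).Connected :=
        Stmt9Aux.del_connected hconn hc ⟨⟨a, ha⟩⟩
      exact ⟨Y, hY, hfv, hGxv.preconnected _ _⟩
  -- a leaf block exists
  have hnt0 := Stmt9Aux.nontrivial_components_of_cut hconn hx0
  obtain ⟨c0⟩ : Nonempty (G.induce {w | w ≠ x0}).ConnectedComponent := hnt0.to_nonempty
  obtain ⟨Y0, hY0, -⟩ := getLeaf x0 hx0 c0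
  have hadj0 : GSD.Adj (inr ()) (inl (f Y0)) := (h2 _).2 ⟨Y0, hY0, rfl⟩
  have hreach_inl : ∀ a b : V, GSD.Reachable (inl a) (inl b) := fun a b =>
    (hconn.preconnected a b).map ⟨inl, fun h => (h1 _ _).2 h⟩
  have hGSDconn : GSD.Connected := by
    rw [connected_iff]
    have hto : ∀ p : V ⊕ Unit, GSD.Reachable p (inr ()) := by
      rintro (a | u)
      · exact (hreach_inl a (f Y0)).trans hadj0.reachable.symm
      · cases u; exact Reachable.refl _
    exact ⟨fun p q => (hto p).trans (hto q).symm, ⟨inr ()⟩⟩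
  -- connectivity after deleting any vertex
  have hdel : ∀ v : V ⊕ Unit, (GSD.induce {w | w ≠ v}).Connected := by
    rintro (xv | u)
    · have hne : (inr () : V ⊕ Unit) ≠ inl xv := Sum.inr_ne_inl
      have hto : ∀ p : ↑{w : V ⊕ Unit | w ≠ inl xv},
          (GSD.induce {w | w ≠ inl xv}).Reachable p ⟨inr (), hne⟩ := by
        rintro ⟨(a | u), hp⟩
        · have ha : a ≠ xv := fun e => hp (by rw [e])
          obtain ⟨Y, hY, hfv, hreach⟩ := core xv a ha
          have hedge : (GSD.induce {w | w ≠ inl xv}).Adj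
              ⟨inl (f Y), fun e => hfv (Sum.inl.inj e)⟩ ⟨inr (), hne⟩ :=
            ((h2 (f Y)).2 ⟨Y, hY, rfl⟩).symm
          exact (hreach.map
            (⟨fun w => ⟨inl w.1, fun e => w.2 (Sum.inl.inj e)⟩, fun h => (h1 _ _).2 h⟩ :
              (G.induce {w | w ≠ xv}) →g (GSD.induce {w | w ≠ inl xv}))).trans
            hedge.reachable
        · cases u; exact Reachable.refl _
      rw [connected_iff]
      exact ⟨fun p q => (hto p).trans (hto q).symm, ⟨⟨inr (), hne⟩⟩⟩
    · cases u
      rw [connected_iff]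
      have hto : ∀ p : ↑{w : V ⊕ Unit | w ≠ inr ()},
          ∃ a : V, p = ⟨inl a, Sum.inl_ne_inr⟩ := by
        rintro ⟨(a | u), hp⟩
        · exact ⟨a, rfl⟩
        · cases u; exact absurd rfl hp
      refine ⟨fun p q => ?_, ⟨⟨inl (f Y0), Sum.inl_ne_inr⟩⟩⟩
      obtain ⟨a, rfl⟩ := hto p
      obtain ⟨b, rfl⟩ := hto q
      exact (hconn.preconnected a b).map
        (⟨fun w => ⟨inl w, Sum.inl_ne_inr⟩, fun h => (h1 _ _).2 h⟩ :
          G →g (GSD.induce {w : V ⊕ Unit | w ≠ inr ()}))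
  refine ⟨hGSDconn, fun v => ?_⟩
  unfold IsCutVertex
  rw [Stmt9Aux.numComponents_eq_one hGSDconn, Stmt9Aux.numComponents_eq_one (hdel v)]
  exact lt_irrefl 1
end
end
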